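/- arXiv:0802.1361 — 6 statements merged into one kernel-verified Lean document; each statement's English description precedes it below -/
import Mathlib

section
/- Let λ ≥ 2 be an integer, and let T be a triangulation graph (maximal outerplanar graph) of a polygon with n ≥ 2λ vertices. Then there exists a diagonal d of T that partitions T into two pieces, one of which contains exactly k edges of the Hamiltonian cycle (polygon boundary edges), where λ ≤ k ≤ 2(λ−1). -/
open Finset

/-- Vertices `i` and `j` are consecutive on the Hamiltonian cycle of the `n`-gon. -/
def adjOnCycle (n : ℕ) (i j : Fin n) : Prop :=
  (i.val + 1) % n = j.val ∨ (j.val + 1) % n = i.val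

instance (n : ℕ) (i j : Fin n) : Decidable (adjOnCycle n i j) := by
  unfold adjOnCycle; infer_instance

/-- A boundary edge of the polygon: a pair of consecutive vertices. -/
def isBoundaryEdge (n : ℕ) (e : Finset (Fin n)) : Prop :=
  ∃ i j : Fin n, i ≠ j ∧ adjOnCycle n i j ∧ e = {i, j}

/-- A diagonal pair of the polygon: a pair of distinct non-consecutive vertices. -/
def isDiagPair (n : ℕ) (e : Finset (Fin n)) : Prop :=
  ∃ i j : Fin n, i ≠ j ∧ ¬ adjOnCycle n i j ∧ e = {i, j}

/-- Two chords of the convex `n`-gon cross (interleave strictly). -/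
def crossing (n : ℕ) (e f : Finset (Fin n)) : Prop :=
  ∃ a b c d : Fin n, e = {a, b} ∧ f = {c, d} ∧
    a.val < c.val ∧ c.val < b.val ∧ b.val < d.val

/-- A triangulation graph of a polygon with `n` vertices (a maximal outerplanar
graph): the vertices `Fin n` in convex position together with a maximal
(i.e. of cardinality `n - 3`) set of pairwise noncrossing diagonals. -/
structure PolyTriangulation (n : ℕ) where
  diags : Finset (Finset (Fin n))
  diags_valid : ∀ e ∈ diags, isDiagPair n e
  noncrossing : ∀ e ∈ diags, ∀ f ∈ diags, ¬ crossing n e f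
  maximal : diags.card = n - 3

/-- An edge of the triangulation graph: a boundary edge or a diagonal. -/
def PolyTriangulation.isEdge {n : ℕ} (T : PolyTriangulation n) (e : Finset (Fin n)) : Prop :=
  isBoundaryEdge n e ∨ e ∈ T.diags

/-- A triangular face of a maximal outerplanar graph is the same as a 3-cycle. -/
def PolyTriangulation.isTriangle {n : ℕ} (T : PolyTriangulation n) (t : Finset (Fin n)) : Prop :=
  ∃ a b c : Fin n, a ≠ b ∧ a ≠ c ∧ b ≠ c ∧ t = {a, b, c} ∧
    T.isEdge {a, b} ∧ T.isEdge {a, c} ∧ T.isEdge {b, c}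

/-- A vertex is incident to (covered by) the set `D` of edges/diagonals. -/
def incidentTo {n : ℕ} (D : Finset (Finset (Fin n))) (v : Fin n) : Prop :=
  ∃ e ∈ D, v ∈ e

/-- A (diagonal) 2-dominating set: a set of edges and diagonals of `T` such that
every triangular face has at least two of its vertices incident to the set. -/
def TwoDominating {n : ℕ} (T : PolyTriangulation n) (D : Finset (Finset (Fin n))) : Prop :=
  (∀ e ∈ D, T.isEdge e) ∧
  ∀ t, T.isTriangle t →
    2 ≤ (t.filter (fun v => ∃ e ∈ D, v ∈ e)).card

/-- An edge 2-dominating set: a set of boundary edges of `T` such that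
every triangular face has at least two of its vertices incident to the set. -/
def EdgeTwoDominating {n : ℕ} (T : PolyTriangulation n) (D : Finset (Finset (Fin n))) : Prop :=
  (∀ e ∈ D, isBoundaryEdge n e) ∧
  ∀ t, T.isTriangle t →
    2 ≤ (t.filter (fun v => ∃ e ∈ D, v ∈ e)).card

/-! The diagonals of a triangulation, read as intervals `[i, j]` of `0, …, n-1`, form a laminar
family; such a family has at most `n - 3` members, so by maximality every diagonal pair not in
`T` crosses one in `T`. Consequently every diagonal `{i, j}` (and the outer side `{0, n-1}`)
carries an ear: a vertex `m` strictly between with `{i, m}` and `{m, j}` sides of `T`. If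
`j - i ≥ 2λ - 1`, one of the two parts has length at least `λ` and is again a diagonal, so
descending through ears from `{0, n-1}` ends at a diagonal of length between `λ` and `2(λ - 1)`. -/

def Interleave (p q : ℕ × ℕ) : Prop :=
  p.1 < q.1 ∧ q.1 < p.2 ∧ p.2 < q.2

/-- Pairwise noncrossing chords of the polygon on the vertices `a, …, b`, none of them a side. -/
structure NoncrossingChords (a b : ℕ) (D : Finset (ℕ × ℕ)) : Prop where
  le_fst : ∀ p ∈ D, a ≤ p.1
  two_le : ∀ p ∈ D, p.1 + 2 ≤ p.2
  snd_le : ∀ p ∈ D, p.2 ≤ b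
  not_interleave : ∀ p ∈ D, ∀ q ∈ D, ¬Interleave p q

namespace NoncrossingChords

variable {a b : ℕ} {D : Finset (ℕ × ℕ)}

lemma of_subset {a' b' : ℕ} {D' : Finset (ℕ × ℕ)} (h : NoncrossingChords a b D) (hD : D' ⊆ D)
    (ha : ∀ p ∈ D', a' ≤ p.1) (hb : ∀ p ∈ D', p.2 ≤ b') : NoncrossingChords a' b' D' where
  le_fst := ha
  two_le p hp := h.two_le p (hD hp)
  snd_le := hb
  not_interleave p hp q hq := h.not_interleave p (hD hp) q (hD hq)

/-- With `c` the farthest neighbour of `a` in `D ∪ {(a, a + 1)}`, no chord straddles `c`, so `D`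
splits into chords on `a, …, c` and chords on `c, …, b`. -/
lemma card_add_two_le_of_card_add_one_le (h : NoncrossingChords a b D) (hab : (a, b) ∉ D)
    (h2 : a + 2 ≤ b)
    (ih : ∀ a' b' (D' : Finset (ℕ × ℕ)), b' - a' < b - a → a' < b' →
      NoncrossingChords a' b' D' → #D' + 1 ≤ b' - a') :
    #D + 2 ≤ b - a := by
  classical
  set S := insert (a + 1) ((D.filter (·.1 = a)).image Prod.snd)
  set c := S.max' (insert_nonempty _ _)
  have hac : a + 1 ≤ c := S.le_max' _ (mem_insert_self _ _)
  have hc_max : ∀ p ∈ D, p.1 = a → p.2 ≤ c := fun p hp hpa =>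
    S.le_max' _ (mem_insert_of_mem (mem_image_of_mem _ (mem_filter.2 ⟨hp, hpa⟩)))
  have hc_mem : c = a + 1 ∨ (a, c) ∈ D := by
    rcases mem_insert.1 (S.max'_mem (insert_nonempty _ _)) with hc | hc
    · exact Or.inl hc
    · obtain ⟨p, hp, hpc⟩ := mem_image.1 hc
      obtain ⟨hpD, hpa⟩ := mem_filter.1 hp
      exact Or.inr ((Prod.ext hpa hpc : p = (a, c)) ▸ hpD)
  have hcb : c < b := by
    rcases hc_mem with hc | hc
    · omega
    · exact lt_of_le_of_ne (h.snd_le _ hc) fun hcb => hab (hcb ▸ hc)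
  have hsplit : ∀ p ∈ D, p.2 ≤ c ∨ c ≤ p.1 := by
    intro p hp
    by_contra! hpc
    have hap := h.le_fst p hp
    by_cases hpa : p.1 = a
    · exact absurd (hc_max p hp hpa) (by omega)
    rcases hc_mem with hc | hc
    · omega
    · exact h.not_interleave _ hc _ hp ⟨by omega, hpc.2, hpc.1⟩
  have hL := ih a c (D.filter (·.2 ≤ c)) (by omega) (by omega)
    (h.of_subset (filter_subset _ _) (fun p hp => h.le_fst p (mem_filter.1 hp).1)
      (fun p hp => (mem_filter.1 hp).2))
  have hR := ih c b (D.filter (c ≤ ·.1)) (by omega) hcb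
    (h.of_subset (filter_subset _ _) (fun p hp => (mem_filter.1 hp).2)
      (fun p hp => h.snd_le p (mem_filter.1 hp).1))
  have hcard : #D ≤ #(D.filter (·.2 ≤ c)) + #(D.filter (c ≤ ·.1)) :=
    calc #D ≤ #(D.filter (·.2 ≤ c) ∪ D.filter (c ≤ ·.1)) :=
          card_le_card fun p hp => by simpa [mem_union, mem_filter, hp] using hsplit p hp
      _ ≤ _ := card_union_le _ _
  omega

theorem card_add_one_le (h : NoncrossingChords a b D) (hab : a < b) : #D + 1 ≤ b - a := by
  induction hk : b - a using Nat.strong_induction_on generalizing a b D with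
  | _ k ih =>
    by_cases h2 : a + 2 ≤ b
    · have hD' := (h.of_subset (erase_subset (a, b) D) (fun p hp => h.le_fst p (mem_of_mem_erase hp))
        (fun p hp => h.snd_le p (mem_of_mem_erase hp))).card_add_two_le_of_card_add_one_le
        (notMem_erase _ _) h2 fun a' b' D' hlt hab' h' => ih _ (hk ▸ hlt) h' hab' rfl
      have := pred_card_le_card_erase (s := D) (a := (a, b))
      omega
    · have hD : D = ∅ := eq_empty_of_forall_notMem fun p hp => by
        have := h.le_fst p hp; have := h.two_le p hp; have := h.snd_le p hp; omega
      simp only [hD, card_empty]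
      omega

theorem card_add_two_le (h : NoncrossingChords a b D) (hab : (a, b) ∉ D) (h2 : a + 2 ≤ b) :
    #D + 2 ≤ b - a :=
  h.card_add_two_le_of_card_add_one_le hab h2 fun _ _ _ _ hlt h' => h'.card_add_one_le hlt

end NoncrossingChords

lemma eq_and_eq_of_pair_eq_pair {α : Type*} [LinearOrder α] {i j k l : α} (hij : i < j)
    (hkl : k < l) (h : ({i, j} : Finset α) = {k, l}) : i = k ∧ j = l := by
  rw [← coe_inj, coe_pair, coe_pair, Set.pair_eq_pair_iff] at h
  rcases h with h | ⟨rfl, rfl⟩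
  · exact h
  · exact (lt_asymm hij hkl).elim

section Polygon

variable {n : ℕ}

lemma adjOnCycle_iff_of_lt {i j : Fin n} (hij : i.val < j.val) :
    adjOnCycle n i j ↔ j.val = i.val + 1 ∨ (i.val = 0 ∧ j.val = n - 1) := by
  have hj := j.isLt
  unfold adjOnCycle
  rw [Nat.mod_eq_of_lt (by omega : i.val + 1 < n)]
  rcases (by omega : j.val + 1 < n ∨ j.val + 1 = n) with h | h
  · rw [Nat.mod_eq_of_lt h]; omega
  · rw [h, Nat.mod_self]; omega

lemma isDiagPair.exists_lt {e : Finset (Fin n)} (h : isDiagPair n e) :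
    ∃ i j : Fin n, i.val < j.val ∧ e = {i, j} := by
  obtain ⟨i, j, hne, -, rfl⟩ := h
  rcases lt_or_gt_of_ne (Fin.val_ne_of_ne hne) with hij | hji
  · exact ⟨i, j, hij, rfl⟩
  · exact ⟨j, i, hji, pair_comm i j⟩

lemma isDiagPair_pair_iff {i j : Fin n} (hij : i.val < j.val) :
    isDiagPair n {i, j} ↔ i.val + 2 ≤ j.val ∧ ¬(i.val = 0 ∧ j.val = n - 1) := by
  constructor
  · rintro ⟨i', j', hne, hadj, h⟩
    rcases lt_or_gt_of_ne (Fin.val_ne_of_ne hne) with hlt | hlt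
    · obtain ⟨rfl, rfl⟩ := eq_and_eq_of_pair_eq_pair (α := Fin n) hij hlt h
      rw [adjOnCycle_iff_of_lt hij] at hadj
      omega
    · obtain ⟨rfl, rfl⟩ := eq_and_eq_of_pair_eq_pair (α := Fin n) hij hlt (h.trans (pair_comm i' j'))
      rw [adjOnCycle, Or.comm, ← adjOnCycle, adjOnCycle_iff_of_lt hij] at hadj
      omega
  · intro h
    exact ⟨i, j, Fin.ne_of_val_ne (by omega), by rw [adjOnCycle_iff_of_lt hij]; omega, rfl⟩

lemma card_le_of_forall_not_interleave (S : Finset (Finset (Fin n)))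
    (hS : ∀ e ∈ S, isDiagPair n e)
    (hnc : ∀ i j k l : Fin n, {i, j} ∈ S → {k, l} ∈ S → ¬Interleave (i.val, j.val) (k.val, l.val)) :
    #S ≤ n - 3 := by
  classical
  rcases S.eq_empty_or_nonempty with rfl | ⟨e₀, he₀⟩
  · simp
  set P := univ.filter fun p : Fin n × Fin n => p.1.val < p.2.val ∧ {p.1, p.2} ∈ S
  set D := P.image fun p => (p.1.val, p.2.val)
  have hSP : #S ≤ #P := by
    refine (card_le_card fun e he => ?_).trans (card_image_le (f := fun p => ({p.1, p.2} : Finset (Fin n))))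
    obtain ⟨i, j, hij, rfl⟩ := (hS e he).exists_lt
    exact mem_image.2 ⟨(i, j), mem_filter.2 ⟨mem_univ _, hij, he⟩, rfl⟩
  have hDP : #D = #P := card_image_of_injective _ fun p q h => by
    simp only [Prod.mk.injEq] at h
    exact Prod.ext (Fin.ext h.1) (Fin.ext h.2)
  have hP : ∀ p ∈ P, p.1.val + 2 ≤ p.2.val ∧ ¬(p.1.val = 0 ∧ p.2.val = n - 1) := fun p hp =>
    have hp := (mem_filter.1 hp).2
    (isDiagPair_pair_iff hp.1).1 (hS _ hp.2)
  have hD : NoncrossingChords 0 (n - 1) D :=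
    { le_fst := fun _ _ => Nat.zero_le _
      two_le := fun p hp => by
        obtain ⟨q, hq, rfl⟩ := mem_image.1 hp
        exact (hP q hq).1
      snd_le := fun p hp => by
        obtain ⟨q, -, rfl⟩ := mem_image.1 hp
        exact Nat.le_sub_one_of_lt q.2.isLt
      not_interleave := fun p hp q hq => by
        obtain ⟨p', hp', rfl⟩ := mem_image.1 hp
        obtain ⟨q', hq', rfl⟩ := mem_image.1 hq
        exact hnc _ _ _ _ (mem_filter.1 hp').2.2 (mem_filter.1 hq').2.2 }
  have hout : (0, n - 1) ∉ D := fun h => by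
    obtain ⟨p, hp, hpD⟩ := mem_image.1 h
    simp only [Prod.mk.injEq] at hpD
    exact (hP p hp).2 hpD
  have hn : 3 ≤ n := by
    obtain ⟨i, j, hij, rfl⟩ := (hS e₀ he₀).exists_lt
    have := ((isDiagPair_pair_iff hij).1 (hS _ he₀)).1
    have := j.isLt
    omega
  have := hD.card_add_two_le hout (by omega)
  omega

namespace PolyTriangulation

variable (T : PolyTriangulation n)

lemma not_interleave {i j k l : Fin n} (hij : {i, j} ∈ T.diags) (hkl : {k, l} ∈ T.diags) :
    ¬Interleave (i.val, j.val) (k.val, l.val) :=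
  fun h => T.noncrossing _ hij _ hkl ⟨i, j, k, l, rfl, rfl, h⟩

lemma exists_interleave_of_notMem {i j : Fin n} (hij : i.val < j.val) (hd : isDiagPair n {i, j})
    (hne : {i, j} ∉ T.diags) :
    ∃ k l : Fin n, {k, l} ∈ T.diags ∧
      (Interleave (i.val, j.val) (k.val, l.val) ∨ Interleave (k.val, l.val) (i.val, j.val)) := by
  by_contra! hcon
  have hpair : ∀ {a b : Fin n}, a.val < b.val → {a, b} = ({i, j} : Finset (Fin n)) → a = i ∧ b = j :=
    fun hab h => eq_and_eq_of_pair_eq_pair hab hij h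
  have hcard := card_le_of_forall_not_interleave (insert {i, j} T.diags)
    (fun e he => (mem_insert.1 he).elim (· ▸ hd) (T.diags_valid e))
    (fun a b c d hab hcd hint => by
      have hlt : a.val < b.val ∧ c.val < d.val := by simp only [Interleave] at hint; omega
      rcases mem_insert.1 hab with he | he <;> rcases mem_insert.1 hcd with hf | hf
      · obtain ⟨rfl, rfl⟩ := hpair hlt.1 he
        obtain ⟨rfl, rfl⟩ := hpair hlt.2 hf
        simp only [Interleave] at hint; omega
      · obtain ⟨rfl, rfl⟩ := hpair hlt.1 he
        exact (hcon c d hf).1 hint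
      · obtain ⟨rfl, rfl⟩ := hpair hlt.2 hf
        exact (hcon a b he).2 hint
      · exact T.not_interleave he hf hint)
  rw [card_insert_of_notMem hne, T.maximal] at hcard
  omega

/-- `{i, j}` with `i < j` is a side of the sub-polygon on `i, …, j`: a boundary edge, a diagonal
of `T`, or the outer side `{0, n - 1}`. -/
def Side (i j : Fin n) : Prop :=
  j.val = i.val + 1 ∨ {i, j} ∈ T.diags ∨ (i.val = 0 ∧ j.val = n - 1)

variable {T}

lemma Side.not_interleave {i j k l : Fin n} (h : T.Side i j) (hkl : {k, l} ∈ T.diags) :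
    ¬Interleave (i.val, j.val) (k.val, l.val) ∧ ¬Interleave (k.val, l.val) (i.val, j.val) := by
  rcases h with h | h | h
  · simp only [Interleave]; omega
  · exact ⟨T.not_interleave h hkl, T.not_interleave hkl h⟩
  · have := l.isLt; simp only [Interleave]; omega

lemma Side.mem_diags {i j : Fin n} (h : T.Side i j) (h2 : i.val + 2 ≤ j.val)
    (hout : ¬(i.val = 0 ∧ j.val = n - 1)) : {i, j} ∈ T.diags := by
  rcases h with h | h | h
  · omega
  · exact h
  · exact absurd h hout

/-- The apex is the farthest `m` with `{i, m}` a side; a diagonal crossing `{m, j}` would cross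
`{i, j}`, cross `{i, m}`, or be a farther side `{i, l}`. -/
lemma Side.exists_apex {i j : Fin n} (h : T.Side i j) (hij : i.val + 2 ≤ j.val) :
    ∃ m : Fin n, i.val < m.val ∧ m.val < j.val ∧ T.Side i m ∧ T.Side m j := by
  classical
  set S := univ.filter fun m : Fin n => i.val < m.val ∧ m.val < j.val ∧ T.Side i m
  have hS : (⟨i.val + 1, by omega⟩ : Fin n) ∈ S :=
    mem_filter.2 ⟨mem_univ _, by simp, by simp; omega, Or.inl rfl⟩
  set m := S.max' ⟨_, hS⟩
  obtain ⟨him, hmj, hm⟩ := (mem_filter.1 (S.max'_mem ⟨_, hS⟩)).2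
  refine ⟨m, him, hmj, hm, ?_⟩
  by_contra hmj'
  have hdiag : isDiagPair n {m, j} :=
    (isDiagPair_pair_iff hmj).2 ⟨by by_contra; exact hmj' (Or.inl (by omega)), by omega⟩
  obtain ⟨k, l, hkl, hint⟩ :=
    T.exists_interleave_of_notMem hmj hdiag fun hmem => hmj' (Or.inr (Or.inl hmem))
  have hij' := h.not_interleave hkl
  have him' := hm.not_interleave hkl
  simp only [Interleave] at hint hij' him'
  rcases hint with hint | hint
  · omega
  rcases lt_trichotomy k.val i.val with hki | hki | hki
  · omega
  · obtain rfl : k = i := Fin.ext hki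
    have hlS : l ∈ S := mem_filter.2 ⟨mem_univ _, by omega, by omega, Or.inr (Or.inl hkl)⟩
    have := Fin.le_iff_val_le_val.1 (S.le_max' l hlS)
    omega
  · omega

lemma Side.exists_diag_length_mem_Icc {lam : ℕ} (hlam : 2 ≤ lam) {i j : Fin n} (h : T.Side i j)
    (hlen : 2 * lam - 1 ≤ j.val - i.val) :
    ∃ k l : Fin n, {k, l} ∈ T.diags ∧ k.val < l.val ∧
      lam ≤ l.val - k.val ∧ l.val - k.val ≤ 2 * (lam - 1) := by
  induction hd : j.val - i.val using Nat.strong_induction_on generalizing i j with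
  | _ d ih =>
    obtain ⟨m, him, hmj, him', hmj'⟩ := h.exists_apex (by omega)
    have descend : ∀ a b : Fin n, T.Side a b → lam ≤ b.val - a.val → b.val - a.val < d →
        ¬(a.val = 0 ∧ b.val = n - 1) → ∃ k l : Fin n, {k, l} ∈ T.diags ∧ k.val < l.val ∧
          lam ≤ l.val - k.val ∧ l.val - k.val ≤ 2 * (lam - 1) := by
      intro a b hab hlam' hlt hout
      by_cases hshort : b.val - a.val ≤ 2 * (lam - 1)
      · exact ⟨a, b, hab.mem_diags (by omega) hout, by omega, hlam', hshort⟩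
      · exact ih _ hlt hab (by omega) rfl
    by_cases hleft : lam ≤ m.val - i.val
    · exact descend i m him' hleft (by omega) (by have := j.isLt; omega)
    · exact descend m j hmj' (by omega) (by omega) (by omega)

end PolyTriangulation

end Polygon

/-- For every integer `λ ≥ 2` and every triangulation graph of a
polygon with `n ≥ 2λ` vertices, there is a diagonal cutting off `k` boundary
edges with `λ ≤ k ≤ 2(λ-1)`. -/
theorem exists_splitting_diagonal (lam n : ℕ) (hlam : 2 ≤ lam) (hn : 2 * lam ≤ n)
    (T : PolyTriangulation n) :
    ∃ d ∈ T.diags, ∃ i j : Fin n, d = {i, j} ∧ i.val < j.val ∧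
      ∃ k : ℕ, (k = j.val - i.val ∨ k = n - (j.val - i.val)) ∧
        lam ≤ k ∧ k ≤ 2 * (lam - 1) := by
  have hout : T.Side ⟨0, by omega⟩ ⟨n - 1, by omega⟩ := Or.inr (Or.inr ⟨rfl, rfl⟩)
  obtain ⟨i, j, hij, hlt, hlo, hhi⟩ :=
    hout.exists_diag_length_mem_Icc hlam (show 2 * lam - 1 ≤ n - 1 - 0 by omega)
  exact ⟨_, hij, i, j, rfl, hlt, _, Or.inl rfl, hlo, hhi⟩
end

section
/- For every m ≥ 1 there exists a triangulation graph of a polygon with n = 3m+2 vertices such that every diagonal 2-dominating set of it has size at least ⌊(n+1)/3⌋ = m+1. -/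
open Finset

/-!
Take the fan at vertex `0` of the `(3m+2)`-gon and cut off the `m` ears `{3k+1, 3k+2, 3k+3}`
by the diagonals `3k+1 — 3k+3`. The ears are vertex-disjoint, so a 2-dominating set covers at
least two vertices of each; the last fan triangle `{0, 3m, 3m+1}` shares only `3m` with the ears,
so one of `0`, `3m+1` is covered as well. Hence at least `2m+1` vertices are covered, while each
edge covers at most two.
-/

lemma Finset.eq_and_eq_of_pair_eq_pair {α : Type*} [LinearOrder α] {a b c d : α}
    (hab : a < b) (hcd : c < d) (h : ({a, b} : Finset α) = {c, d}) : a = c ∧ b = d := by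
  have hset : ({a, b} : Set α) = {c, d} := by rw [← coe_pair, h, coe_pair]
  rcases Set.pair_eq_pair_iff.1 hset with h' | ⟨rfl, rfl⟩
  · exact h'
  · exact absurd (hab.trans hcd) (lt_irrefl _)

lemma isBoundaryEdge_of_val_succ {n : ℕ} {i j : Fin n} (h : i.val + 1 = j.val) :
    isBoundaryEdge n {i, j} :=
  ⟨i, j, by rintro rfl; omega, Or.inl (by rw [Nat.mod_eq_of_lt (h ▸ j.isLt), h]), rfl⟩

lemma isBoundaryEdge_of_val_wrap {n : ℕ} (hn : 2 ≤ n) {i j : Fin n} (hi : i.val = 0)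
    (hj : j.val + 1 = n) :
    isBoundaryEdge n {i, j} :=
  ⟨i, j, by rintro rfl; omega, Or.inr (by rw [hj, Nat.mod_self, hi]), rfl⟩

lemma not_adjOnCycle_of_val {n : ℕ} {i j : Fin n} (hij : i.val + 1 < j.val)
    (hwrap : ¬ (i.val = 0 ∧ j.val + 1 = n)) : ¬ adjOnCycle n i j := by
  have hj := j.isLt
  rintro (h | h)
  · rw [Nat.mod_eq_of_lt (by omega)] at h
    omega
  · rcases (Nat.succ_le_of_lt hj).lt_or_eq with hlt | heq
    · rw [Nat.mod_eq_of_lt hlt] at h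
      omega
    · rw [show (j : ℕ) + 1 = n from heq, Nat.mod_self] at h
      omega

lemma PolyTriangulation.card_le_two_of_isEdge {n : ℕ} (T : PolyTriangulation n)
    {e : Finset (Fin n)} (he : T.isEdge e) : e.card ≤ 2 := by
  rcases he with ⟨i, j, -, -, rfl⟩ | hd
  · exact card_le_two
  · obtain ⟨i, j, -, -, rfl⟩ := T.diags_valid e hd
    exact card_le_two

namespace TwoDominating

variable {n : ℕ} {T : PolyTriangulation n} {D : Finset (Finset (Fin n))}

lemma card_biUnion_le (hD : TwoDominating T D) : (D.biUnion id).card ≤ 2 * D.card := by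
  rw [mul_comm]
  exact card_biUnion_le_card_mul D id 2 fun e he => T.card_le_two_of_isEdge (hD.1 e he)

lemma two_le_card_inter (hD : TwoDominating T D) {t : Finset (Fin n)} (ht : T.isTriangle t) :
    2 ≤ (t ∩ D.biUnion id).card := by
  have hfilter : t.filter (fun v => ∃ e ∈ D, v ∈ e) = t ∩ D.biUnion id := by
    ext v
    simp [mem_biUnion]
  exact hfilter ▸ hD.2 t ht

end TwoDominating

namespace FanWithEars

variable {m : ℕ}

def vert (m a : ℕ) : Fin (3 * m + 2) := ⟨a % (3 * m + 2), Nat.mod_lt _ (by omega)⟩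

lemma vert_val {a : ℕ} (h : a < 3 * m + 2) : (vert m a).val = a := Nat.mod_eq_of_lt h

lemma vert_ne {a b : ℕ} (ha : a < 3 * m + 2) (hb : b < 3 * m + 2) (hab : a ≠ b) :
    vert m a ≠ vert m b := fun h => hab (by rw [← vert_val ha, ← vert_val hb, h])

def chord (m a b : ℕ) : Finset (Fin (3 * m + 2)) := {vert m a, vert m b}

lemma eq_and_eq_of_chord_eq_pair {a b : ℕ} {A B : Fin (3 * m + 2)} (hab : a < b)
    (hb : b < 3 * m + 2) (hAB : A < B) (h : chord m a b = {A, B}) : a = A.val ∧ b = B.val := by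
  have hlt : vert m a < vert m b := by
    rw [Fin.lt_def, vert_val (hab.trans hb), vert_val hb]
    exact hab
  obtain ⟨rfl, rfl⟩ := Finset.eq_and_eq_of_pair_eq_pair hlt hAB h
  exact ⟨(vert_val (hab.trans hb)).symm, (vert_val hb).symm⟩

lemma eq_and_eq_of_chord_eq_chord {a b c d : ℕ} (hab : a < b) (hb : b < 3 * m + 2)
    (hcd : c < d) (hd : d < 3 * m + 2) (h : chord m a b = chord m c d) : a = c ∧ b = d := by
  have hlt : vert m c < vert m d := by
    rw [Fin.lt_def, vert_val (hcd.trans hd), vert_val hd]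
    exact hcd
  rw [← vert_val (hcd.trans hd), ← vert_val hd]
  exact eq_and_eq_of_chord_eq_pair hab hb hlt h

/- The diagonal with index `3k` cuts off the ear `3k+1, 3k+2, 3k+3`; those with indices `3k+1`
and `3k+2` form the fan at vertex `0`, ending at `3k+3` and `3k+4`. -/
def diagLo (i : ℕ) : ℕ := if i % 3 = 0 then i + 1 else 0

def diagHi (i : ℕ) : ℕ := if i % 3 = 0 then i + 3 else i + 2

lemma diagLo_diagHi_cases (i : ℕ) :
    (i % 3 = 0 ∧ diagLo i = i + 1 ∧ diagHi i = i + 3) ∨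
      (i % 3 ≠ 0 ∧ diagLo i = 0 ∧ diagHi i = i + 2) := by
  unfold diagLo diagHi
  split_ifs with h <;> simp [h]

lemma diagLo_lt_diagHi (i : ℕ) : diagLo i < diagHi i := by
  rcases diagLo_diagHi_cases i with ⟨_, _, _⟩ | ⟨_, _, _⟩ <;> omega

lemma diagHi_le {i : ℕ} (hi : i < 3 * m - 1) : diagHi i ≤ 3 * m := by
  rcases diagLo_diagHi_cases i with ⟨_, _, _⟩ | ⟨_, _, _⟩ <;> omega

def diags (m : ℕ) : Finset (Finset (Fin (3 * m + 2))) :=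
  (range (3 * m - 1)).image fun i => chord m (diagLo i) (diagHi i)

lemma isDiagPair_of_mem_diags {e : Finset (Fin (3 * m + 2))} (he : e ∈ diags m) :
    isDiagPair (3 * m + 2) e := by
  obtain ⟨i, hi, rfl⟩ := mem_image.1 he
  have hle := diagHi_le (mem_range.1 hi)
  have hlt := diagLo_lt_diagHi i
  have hlo : (vert m (diagLo i)).val = diagLo i := vert_val (by omega)
  have hhi : (vert m (diagHi i)).val = diagHi i := vert_val (by omega)
  refine ⟨vert m (diagLo i), vert m (diagHi i), vert_ne (by omega) (by omega) hlt.ne,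
    not_adjOnCycle_of_val ?_ ?_, rfl⟩ <;>
  rcases diagLo_diagHi_cases i with ⟨_, _, _⟩ | ⟨_, _, _⟩ <;> omega

lemma not_crossing_of_mem_diags {e f : Finset (Fin (3 * m + 2))} (he : e ∈ diags m)
    (hf : f ∈ diags m) : ¬ crossing (3 * m + 2) e f := by
  rintro ⟨A, B, C, D, hAB, hCD, hAC, hCB, hBD⟩
  obtain ⟨i, hi, rfl⟩ := mem_image.1 he
  obtain ⟨j, hj, rfl⟩ := mem_image.1 hf
  obtain ⟨hA, hB⟩ := eq_and_eq_of_chord_eq_pair (diagLo_lt_diagHi i)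
    (by have := diagHi_le (mem_range.1 hi); omega) (hAC.trans hCB) hAB
  obtain ⟨hC, hD⟩ := eq_and_eq_of_chord_eq_pair (diagLo_lt_diagHi j)
    (by have := diagHi_le (mem_range.1 hj); omega) (hCB.trans hBD) hCD
  rcases diagLo_diagHi_cases i with ⟨_, _, _⟩ | ⟨_, _, _⟩ <;>
  rcases diagLo_diagHi_cases j with ⟨_, _, _⟩ | ⟨_, _, _⟩ <;> omega

lemma card_diags : (diags m).card = 3 * m + 2 - 3 := by
  rw [diags, card_image_of_injOn, card_range]
  · omega
  intro i hi j hj h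
  have hle := diagHi_le (mem_range.1 hi)
  have hle' := diagHi_le (mem_range.1 hj)
  obtain ⟨h₁, h₂⟩ := eq_and_eq_of_chord_eq_chord (diagLo_lt_diagHi i) (by omega)
    (diagLo_lt_diagHi j) (by omega) h
  rcases diagLo_diagHi_cases i with ⟨_, _, _⟩ | ⟨_, _, _⟩ <;>
  rcases diagLo_diagHi_cases j with ⟨_, _, _⟩ | ⟨_, _, _⟩ <;> omega

def triangulation (m : ℕ) : PolyTriangulation (3 * m + 2) where
  diags := diags m
  diags_valid _ := isDiagPair_of_mem_diags
  noncrossing _ he _ hf := not_crossing_of_mem_diags he hf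
  maximal := card_diags

lemma chord_mem_diags {i : ℕ} (hi : i < 3 * m - 1) :
    chord m (diagLo i) (diagHi i) ∈ (triangulation m).diags :=
  mem_image_of_mem _ (mem_range.2 hi)

lemma isEdge_succ {a : ℕ} (ha : a + 1 < 3 * m + 2) :
    (triangulation m).isEdge {vert m a, vert m (a + 1)} :=
  Or.inl (isBoundaryEdge_of_val_succ (by rw [vert_val (by omega), vert_val ha]))

def ear (m k : ℕ) : Finset (Fin (3 * m + 2)) :=
  {vert m (3 * k + 1), vert m (3 * k + 2), vert m (3 * k + 3)}

lemma isTriangle_ear {k : ℕ} (hk : k < m) : (triangulation m).isTriangle (ear m k) := by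
  have hchord := chord_mem_diags (m := m) (i := 3 * k) (by omega)
  rw [diagLo, diagHi, if_pos (by omega), if_pos (by omega)] at hchord
  exact ⟨_, _, _, vert_ne (by omega) (by omega) (by omega),
    vert_ne (by omega) (by omega) (by omega), vert_ne (by omega) (by omega) (by omega), rfl,
    isEdge_succ (by omega), Or.inr hchord, isEdge_succ (by omega)⟩

def lastTriangle (m : ℕ) : Finset (Fin (3 * m + 2)) :=
  {vert m 0, vert m (3 * m), vert m (3 * m + 1)}

lemma isTriangle_lastTriangle (hm : 1 ≤ m) : (triangulation m).isTriangle (lastTriangle m) := by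
  have hchord := chord_mem_diags (m := m) (i := 3 * m - 2) (by omega)
  rw [diagLo, diagHi, if_neg (by omega), if_neg (by omega), show 3 * m - 2 + 2 = 3 * m by omega]
    at hchord
  have hwrap : (triangulation m).isEdge {vert m 0, vert m (3 * m + 1)} :=
    Or.inl (isBoundaryEdge_of_val_wrap (by omega) (vert_val (by omega))
      (by rw [vert_val (by omega : 3 * m + 1 < 3 * m + 2)]))
  exact ⟨_, _, _, vert_ne (by omega) (by omega) (by omega),
    vert_ne (by omega) (by omega) (by omega), vert_ne (by omega) (by omega) (by omega), rfl,
    Or.inr hchord, hwrap, isEdge_succ (by omega)⟩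

def block (m : ℕ) (x : Fin (3 * m + 2)) : ℕ :=
  if x.val = 0 ∨ x.val = 3 * m + 1 then m else (x.val - 1) / 3

lemma ear_inter_subset {k : ℕ} (hk : k < m) (S : Finset (Fin (3 * m + 2))) :
    ear m k ∩ S ⊆ {x ∈ S | block m x = k} := by
  have hblock : ∀ a, 3 * k + 1 ≤ a → a ≤ 3 * k + 3 → block m (vert m a) = k := by
    intro a ha₁ ha₂
    rw [block, vert_val (by omega : a < 3 * m + 2)]
    split_ifs <;> omega
  intro x hx
  rw [mem_inter, ear, mem_insert, mem_insert, mem_singleton] at hx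
  refine mem_filter.2 ⟨hx.2, ?_⟩
  rcases hx.1 with rfl | rfl | rfl <;> exact hblock _ (by omega) (by omega)

lemma lastTriangle_inter_subset (S : Finset (Fin (3 * m + 2))) :
    lastTriangle m ∩ S ⊆ insert (vert m (3 * m)) {x ∈ S | block m x = m} := by
  have hblock : ∀ a, a = 0 ∨ a = 3 * m + 1 → block m (vert m a) = m := by
    intro a ha
    rw [block, vert_val (by omega : a < 3 * m + 2), if_pos ha]
  intro x hx
  rw [mem_inter, lastTriangle, mem_insert, mem_insert, mem_singleton] at hx
  rcases hx with ⟨rfl | rfl | rfl, hS⟩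
  · exact mem_insert_of_mem (mem_filter.2 ⟨hS, hblock 0 (Or.inl rfl)⟩)
  · exact mem_insert_self _ _
  · exact mem_insert_of_mem (mem_filter.2 ⟨hS, hblock _ (Or.inr rfl)⟩)

lemma two_mul_add_one_le_card (hm : 1 ≤ m) {S : Finset (Fin (3 * m + 2))}
    (hS : ∀ t, (triangulation m).isTriangle t → 2 ≤ #(t ∩ S)) : 2 * m + 1 ≤ #S := by
  have hfibers : #S = ∑ k ∈ range (m + 1), #{x ∈ S | block m x = k} :=
    card_eq_sum_card_fiberwise fun x _ => by
      simp only [coe_range, Set.mem_Iio, block]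
      split_ifs <;> omega
  have hears : ∀ k ∈ range m, 2 ≤ #{x ∈ S | block m x = k} := fun k hk =>
    (hS _ (isTriangle_ear (mem_range.1 hk))).trans
      (card_le_card (ear_inter_subset (mem_range.1 hk) S))
  have hlast : 2 ≤ #{x ∈ S | block m x = m} + 1 :=
    (hS _ (isTriangle_lastTriangle hm)).trans
      ((card_le_card (lastTriangle_inter_subset S)).trans (card_insert_le _ _))
  have hsum := card_nsmul_le_sum (range m) _ 2 hears
  rw [card_range, smul_eq_mul] at hsum
  rw [hfibers, sum_range_succ]
  omega

end FanWithEars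

/-- for every `m ≥ 1` there is a triangulation graph of a polygon
with `n = 3m+2` vertices every diagonal 2-dominating set of which has size at
least `⌊(n+1)/3⌋ = m+1`. -/
theorem diag_two_dominating_lower_bound (m : ℕ) (hm : 1 ≤ m) :
    ∃ T : PolyTriangulation (3 * m + 2),
      ∀ D : Finset (Finset (Fin (3 * m + 2))), TwoDominating T D → m + 1 ≤ D.card := by
  refine ⟨FanWithEars.triangulation m, fun D hD => ?_⟩
  have hcovered := FanWithEars.two_mul_add_one_le_card hm fun _ => hD.two_le_card_inter
  have := hD.card_biUnion_le
  omega
end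

section
/- Every triangulation graph of a polygon with n vertices, 3 ≤ n ≤ 9 and n ≠ 4, admits an edge 2-dominating set of size at most ⌊(2n+1)/5⌋; for n = 4, an edge 2-dominating set of size 2 exists. -/
open Finset

/-! Let `D` be a set of boundary edges and `U` a set of vertices, no two joined by an edge of `T`,
containing every vertex not covered by `D`. Each triangle has at most one vertex in `U`, so `D` is
edge 2-dominating. For `n = 3, 4, 5, 7` the boundary edges `01, 23, …` leave at most one vertex
uncovered. For `n = 6, 8` the crossing chords `03` and `14` are not both diagonals of `T`, so `{0, 3}`
or `{1, 4}` is independent. For `n = 9`, any three chords lying in the triangles `036`, `147` and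
`258` respectively contain a crossing pair, so one of these triangles spans no diagonal of `T`. -/

-- Bounding the witnesses by the elements of `e` makes these predicates cheap to `decide`.
theorem isBoundaryEdge_iff_exists_mem {n : ℕ} {e : Finset (Fin n)} :
    isBoundaryEdge n e ↔ ∃ i ∈ e, ∃ j ∈ e, i ≠ j ∧ adjOnCycle n i j ∧ e = {i, j} := by
  constructor
  · rintro ⟨i, j, h, h', rfl⟩
    exact ⟨i, by simp, j, by simp, h, h', rfl⟩
  · rintro ⟨i, -, j, -, h⟩
    exact ⟨i, j, h⟩

instance (n : ℕ) (e : Finset (Fin n)) : Decidable (isBoundaryEdge n e) :=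
  decidable_of_iff _ isBoundaryEdge_iff_exists_mem.symm

instance {n : ℕ} (D : Finset (Finset (Fin n))) (v : Fin n) : Decidable (incidentTo D v) := by
  unfold incidentTo; infer_instance

theorem crossing_iff_exists_mem {n : ℕ} {e f : Finset (Fin n)} :
    crossing n e f ↔ ∃ a ∈ e, ∃ b ∈ e, ∃ c ∈ f, ∃ d ∈ f,
      e = {a, b} ∧ f = {c, d} ∧ a < c ∧ c < b ∧ b < d := by
  constructor
  · rintro ⟨a, b, c, d, rfl, rfl, h⟩
    exact ⟨a, by simp, b, by simp, c, by simp, d, by simp, rfl, rfl, h⟩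
  · rintro ⟨a, -, b, -, c, -, d, -, h⟩
    exact ⟨a, b, c, d, h⟩

instance (n : ℕ) (e f : Finset (Fin n)) : Decidable (crossing n e f) :=
  decidable_of_iff _ crossing_iff_exists_mem.symm

namespace PolyTriangulation

variable {n : ℕ} (T : PolyTriangulation n)

theorem not_isEdge_self (a : Fin n) : ¬ T.isEdge {a, a} := by
  have hcard : ({a, a} : Finset (Fin n)).card = 1 := by simp
  rintro (⟨i, j, hij, -, he⟩ | hd)
  · rw [he, card_pair hij] at hcard; omega
  · obtain ⟨i, j, hij, -, he⟩ := T.diags_valid _ hd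
    rw [he, card_pair hij] at hcard; omega

theorem not_mem_diags_or_not_mem_diags_of_crossing {e f : Finset (Fin n)}
    (h : crossing n e f) : e ∉ T.diags ∨ f ∉ T.diags :=
  not_and_or.mp fun ⟨he, hf⟩ => T.noncrossing e he f hf h

def IsIndependent (U : Finset (Fin n)) : Prop :=
  ∀ u ∈ U, ∀ v ∈ U, ¬ T.isEdge {u, v}

theorem isIndependent_singleton (a : Fin n) : T.IsIndependent {a} := by
  intro u hu v hv
  rw [mem_singleton.1 hu, mem_singleton.1 hv]
  exact T.not_isEdge_self a

theorem isIndependent_pair {a b : Fin n} (hb : ¬ isBoundaryEdge n {a, b})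
    (hd : {a, b} ∉ T.diags) : T.IsIndependent {a, b} := by
  have hab : ¬ T.isEdge {a, b} := fun h => h.elim hb hd
  intro u hu v hv
  simp only [mem_insert, mem_singleton] at hu hv
  rcases hu with rfl | rfl <;> rcases hv with rfl | rfl
  · exact T.not_isEdge_self _
  · exact hab
  · rwa [pair_comm]
  · exact T.not_isEdge_self _

theorem exists_mem_diags_of_not_isIndependent {U : Finset (Fin n)}
    (hb : ∀ e ∈ U.powersetCard 2, ¬ isBoundaryEdge n e) (hU : ¬ T.IsIndependent U) :
    ∃ e ∈ U.powersetCard 2, e ∈ T.diags := by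
  simp only [IsIndependent, not_forall, not_not] at hU
  obtain ⟨a, ha, b, hb', hab⟩ := hU
  have hne : a ≠ b := by
    rintro rfl
    exact T.not_isEdge_self a hab
  have hmem : {a, b} ∈ U.powersetCard 2 :=
    mem_powersetCard.2 ⟨insert_subset ha (singleton_subset_iff.2 hb'), card_pair hne⟩
  exact ⟨{a, b}, hmem, hab.resolve_left (hb _ hmem)⟩

theorem edgeTwoDominating_of_isIndependent {D : Finset (Finset (Fin n))}
    (hD : ∀ e ∈ D, isBoundaryEdge n e) {U : Finset (Fin n)} (hU : T.IsIndependent U)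
    (hcov : ∀ v ∉ U, incidentTo D v) : EdgeTwoDominating T D := by
  refine ⟨hD, ?_⟩
  rintro t ⟨a, b, c, hab, hac, hbc, rfl, hAB, hAC, hBC⟩
  have two_le {x y : Fin n} (hx : x ∈ ({a, b, c} : Finset (Fin n)))
      (hy : y ∈ ({a, b, c} : Finset (Fin n))) (hxy : x ≠ y) (hxU : x ∉ U) (hyU : y ∉ U) :
      2 ≤ (({a, b, c} : Finset (Fin n)).filter (fun v => ∃ e ∈ D, v ∈ e)).card :=
    one_lt_card.2 ⟨x, mem_filter.2 ⟨hx, hcov x hxU⟩, y, mem_filter.2 ⟨hy, hcov y hyU⟩, hxy⟩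
  by_cases ha : a ∈ U
  · have hb : b ∉ U := fun hb => hU a ha b hb hAB
    have hc : c ∉ U := fun hc => hU a ha c hc hAC
    exact two_le (by simp) (by simp) hbc hb hc
  · by_cases hb : b ∈ U
    · exact two_le (by simp) (by simp) hac ha fun hc => hU b hb c hc hBC
    · exact two_le (by simp) (by simp) hab ha hb

end PolyTriangulation

theorem exists_edgeTwoDominating_six (T : PolyTriangulation 6) :
    ∃ D, EdgeTwoDominating T D ∧ D.card ≤ 2 := by
  rcases T.not_mem_diags_or_not_mem_diags_of_crossing (show crossing 6 {0, 3} {1, 4} by decide)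
    with h | h
  · exact ⟨{{1, 2}, {4, 5}}, T.edgeTwoDominating_of_isIndependent (by decide +kernel)
      (T.isIndependent_pair (by decide) h) (by decide), by decide⟩
  · exact ⟨{{2, 3}, {5, 0}}, T.edgeTwoDominating_of_isIndependent (by decide +kernel)
      (T.isIndependent_pair (by decide) h) (by decide), by decide⟩

theorem exists_edgeTwoDominating_eight (T : PolyTriangulation 8) :
    ∃ D, EdgeTwoDominating T D ∧ D.card ≤ 3 := by
  rcases T.not_mem_diags_or_not_mem_diags_of_crossing (show crossing 8 {0, 3} {1, 4} by decide)
    with h | h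
  · exact ⟨{{1, 2}, {4, 5}, {6, 7}}, T.edgeTwoDominating_of_isIndependent (by decide +kernel)
      (T.isIndependent_pair (by decide) h) (by decide), by decide⟩
  · exact ⟨{{2, 3}, {5, 6}, {7, 0}}, T.edgeTwoDominating_of_isIndependent (by decide +kernel)
      (T.isIndependent_pair (by decide) h) (by decide), by decide⟩

theorem exists_crossing_of_chords_nine :
    ∀ x ∈ ({0, 3, 6} : Finset (Fin 9)).powersetCard 2,
    ∀ y ∈ ({1, 4, 7} : Finset (Fin 9)).powersetCard 2,
    ∀ z ∈ ({2, 5, 8} : Finset (Fin 9)).powersetCard 2,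
    ∃ p ∈ ({x, y, z} : Finset (Finset (Fin 9))), ∃ q ∈ ({x, y, z} : Finset (Finset (Fin 9))),
      crossing 9 p q := by
  decide +kernel

theorem isIndependent_triangle_nine (T : PolyTriangulation 9) :
    T.IsIndependent {0, 3, 6} ∨ T.IsIndependent {1, 4, 7} ∨ T.IsIndependent {2, 5, 8} := by
  by_contra! h
  obtain ⟨h₀, h₁, h₂⟩ := h
  obtain ⟨x, hx, hxT⟩ := T.exists_mem_diags_of_not_isIndependent (by decide +kernel) h₀
  obtain ⟨y, hy, hyT⟩ := T.exists_mem_diags_of_not_isIndependent (by decide +kernel) h₁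
  obtain ⟨z, hz, hzT⟩ := T.exists_mem_diags_of_not_isIndependent (by decide +kernel) h₂
  obtain ⟨p, hp, q, hq, hpq⟩ := exists_crossing_of_chords_nine x hx y hy z hz
  have hsub : ({x, y, z} : Finset (Finset (Fin 9))) ⊆ T.diags := by
    simp only [insert_subset_iff, singleton_subset_iff]
    exact ⟨hxT, hyT, hzT⟩
  exact T.noncrossing p (hsub hp) q (hsub hq) hpq

theorem exists_edgeTwoDominating_nine (T : PolyTriangulation 9) :
    ∃ D, EdgeTwoDominating T D ∧ D.card ≤ 3 := by
  rcases isIndependent_triangle_nine T with hU | hU | hU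
  · exact ⟨{{1, 2}, {4, 5}, {7, 8}}, T.edgeTwoDominating_of_isIndependent (by decide +kernel) hU
      (by decide +kernel), card_le_three⟩
  · exact ⟨{{2, 3}, {5, 6}, {8, 0}}, T.edgeTwoDominating_of_isIndependent (by decide +kernel) hU
      (by decide +kernel), card_le_three⟩
  · exact ⟨{{3, 4}, {6, 7}, {0, 1}}, T.edgeTwoDominating_of_isIndependent (by decide +kernel) hU
      (by decide +kernel), card_le_three⟩

/-- every triangulation graph with `3 ≤ n ≤ 9` vertices has an edge
2-dominating set of size at most `⌊(2n+1)/5⌋`, except for `n = 4`, where an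
edge 2-dominating set of size `2` exists. -/
theorem small_edge_two_dominating (n : ℕ) (h3 : 3 ≤ n) (h9 : n ≤ 9)
    (T : PolyTriangulation n) :
    (n ≠ 4 → ∃ D : Finset (Finset (Fin n)),
        EdgeTwoDominating T D ∧ D.card ≤ (2 * n + 1) / 5) ∧
    (n = 4 → ∃ D : Finset (Finset (Fin n)),
        EdgeTwoDominating T D ∧ D.card = 2) := by
  refine ⟨fun hn => ?_, fun hn => ?_⟩
  · interval_cases n
    · exact ⟨{{0, 1}}, T.edgeTwoDominating_of_isIndependent (by decide)
        (T.isIndependent_singleton 2) (by decide), by decide⟩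
    · contradiction
    · exact ⟨{{0, 1}, {2, 3}}, T.edgeTwoDominating_of_isIndependent (by decide)
        (T.isIndependent_singleton 4) (by decide), by decide⟩
    · exact exists_edgeTwoDominating_six T
    · exact ⟨{{0, 1}, {2, 3}, {4, 5}}, T.edgeTwoDominating_of_isIndependent (by decide +kernel)
        (T.isIndependent_singleton 6) (by decide), by decide⟩
    · exact exists_edgeTwoDominating_eight T
    · exact exists_edgeTwoDominating_nine T
  · subst hn
    exact ⟨{{0, 1}, {2, 3}}, T.edgeTwoDominating_of_isIndependent (by decide)
      (T.isIndependent_singleton 0) (by decide), by decide⟩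
end

section
/- Every triangulation graph of a polygon with n ≥ 3 vertices, n ≠ 4, admits an edge 2-dominating set of size at most ⌊(2n+1)/5⌋; for n = 4 an edge 2-dominating set of size 2 exists. -/
/-!
Regard the boundary edges and diagonals of the triangulation as a graph `G` on the vertices
`0, …, n - 1` of a convex polygon, whose edges do not cross. A triangle has at most one vertex in
an independent set `U` of `G`, so it suffices to cover all vertices outside some such `U` by
`⌊(2n+1)/5⌋` boundary edges. This holds for every noncrossing graph on `n ≠ 4` vertices, by strong
induction removing five consecutive vertices.

After a rotation, all neighbours of vertex `2` and of vertex `1` or `3` lie in `{0, …, 4}`: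
rotate a shortest chord of length `s ≥ 3` to `{0, s}` (to `{1, 4}` if `s = 3`); if there is none,
all chords have length `≤ 2` and some ear `{n - 1, 1}` is missing. A cover of the polygon on
`5, …, n - 1` then lifts with two more edges and one more vertex of `U`: `{0, 1}`, `{3, 4}` and
vertex `2`; or, if it uses the closing edge `{n - 1, 5}`, which becomes `{n - 1, 0}`, the edge
`{4, 5}` together with `{2, 3}` and vertex `1` or `{1, 2}` and vertex `3`. Polygons with
`n ≤ 3`, `n = 5` or `n = 7` vertices are covered by every other edge, and the 9-gon by taking for
`U` a residue class modulo 3 that spans no chord.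
-/

open Finset

theorem Nat.add_one_mod_cases {a n : ℕ} (h : a < n) :
    (a + 1 < n ∧ (a + 1) % n = a + 1) ∨ (a + 1 = n ∧ (a + 1) % n = 0) := by
  rcases Nat.lt_or_ge (a + 1) n with h' | h'
  · exact Or.inl ⟨h', Nat.mod_eq_of_lt h'⟩
  · obtain rfl : a + 1 = n := by omega
    exact Or.inr ⟨rfl, Nat.mod_self _⟩

theorem Fin.eq_or_eq_add_one_of_val {n : ℕ} [NeZero n] {i v : Fin n}
    (h : v.val = i.val ∨ v.val = i.val + 1) : v = i ∨ v = i + 1 := by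
  rcases h with h | h
  · exact Or.inl (Fin.ext h)
  · exact Or.inr (Fin.ext (by rw [Fin.val_add_one_of_lt' (by omega)]; exact h))

theorem Fin.add_one_eq_zero_of_val {n : ℕ} [NeZero n] {i : Fin n} (h : i.val + 1 = n) : i + 1 = 0 :=
  Fin.ext (by rw [Fin.val_add, Fin.val_one', Nat.add_mod_mod, h, Nat.mod_self, Fin.val_zero])

theorem SimpleGraph.IsIndepSet.two_le_card_filter {α : Type*} [DecidableEq α]
    {G : SimpleGraph α} {U : Set α} (hU : G.IsIndepSet U) {p : α → Prop} [DecidablePred p]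
    (hp : ∀ v ∉ U, p v) {a b c : α} (hab : G.Adj a b) (hac : G.Adj a c) (hbc : G.Adj b c) :
    2 ≤ #(({a, b, c} : Finset α).filter p) := by
  have two : ∀ x ∈ ({a, b, c} : Finset α), ∀ y ∈ ({a, b, c} : Finset α), x ≠ y → x ∉ U →
      y ∉ U → 2 ≤ #(({a, b, c} : Finset α).filter p) := fun x hx y hy hxy hxU hyU =>
    (card_pair hxy).symm.le.trans (card_le_card (insert_subset (mem_filter.2 ⟨hx, hp x hxU⟩)
      (singleton_subset_iff.2 (mem_filter.2 ⟨hy, hp y hyU⟩))))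
  by_cases ha : a ∈ U
  · exact two b (by simp) c (by simp) hbc.ne (fun hb => hU ha hb hab.ne hab)
      (fun hc => hU ha hc hac.ne hac)
  by_cases hb : b ∈ U
  · exact two a (by simp) c (by simp) hac.ne ha (fun hc => hU hb hc hbc.ne hbc)
  · exact two a (by simp) b (by simp) hab.ne ha hb

namespace PolygonCover

open SimpleGraph

variable {n : ℕ}

def Noncrossing (G : SimpleGraph (Fin n)) : Prop :=
  ∀ ⦃a b c d : Fin n⦄, a < b → b < c → c < d → G.Adj a c → ¬ G.Adj b d

theorem Noncrossing.comap_of_strictMono {m : ℕ} {G : SimpleGraph (Fin n)} (hG : Noncrossing G)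
    {f : Fin m → Fin n} (hf : StrictMono f) : Noncrossing (G.comap f) :=
  fun _ _ _ _ hab hbc hcd => hG (hf hab) (hf hbc) (hf hcd)

theorem Noncrossing.comap_add_right [NeZero n] {G : SimpleGraph (Fin n)} (hG : Noncrossing G)
    (k : Fin n) : Noncrossing (G.comap (· + k)) := by
  intro a b c d hab hbc hcd hac hbd
  simp only [comap_adj] at hac hbd
  have ha := Fin.val_add_eq_ite a k
  have hb := Fin.val_add_eq_ite b k
  have hc := Fin.val_add_eq_ite c k
  have hd := Fin.val_add_eq_ite d k
  -- adding `k` shifts `a < b < c < d` cyclically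
  have hcyc : (a + k < b + k ∧ b + k < c + k ∧ c + k < d + k) ∨
      (d + k < a + k ∧ a + k < b + k ∧ b + k < c + k) ∨
      (c + k < d + k ∧ d + k < a + k ∧ a + k < b + k) ∨
      (b + k < c + k ∧ c + k < d + k ∧ d + k < a + k) := by
    simp only [Fin.lt_def] at hab hbc hcd ⊢
    have := (a + k).isLt
    have := d.isLt
    split_ifs at ha hb hc hd <;> omega
  rcases hcyc with ⟨h₁, h₂, h₃⟩ | ⟨h₁, h₂, h₃⟩ | ⟨h₁, h₂, h₃⟩ | ⟨h₁, h₂, h₃⟩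
  · exact hG h₁ h₂ h₃ hac hbd
  · exact hG h₁ h₂ h₃ hbd.symm hac
  · exact hG h₁ h₂ h₃ hac.symm hbd.symm
  · exact hG h₁ h₂ h₃ hbd hac.symm

/-- `i ∈ D` stands for the boundary edge `{i, i + 1}`, with addition modulo `n`. -/
def HasIndepEdgeCover [NeZero n] (G : SimpleGraph (Fin n)) (b : ℕ) : Prop :=
  ∃ U D : Finset (Fin n), G.IsIndepSet U ∧ (∀ v ∉ U, ∃ i ∈ D, v = i ∨ v = i + 1) ∧ #D ≤ b

section HasIndepEdgeCover

variable [NeZero n] {G : SimpleGraph (Fin n)} {b : ℕ}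

theorem HasIndepEdgeCover.mono (h : HasIndepEdgeCover G b) {b' : ℕ} (hb : b ≤ b') :
    HasIndepEdgeCover G b' :=
  let ⟨U, D, hU, hD, hcard⟩ := h
  ⟨U, D, hU, hD, hcard.trans hb⟩

theorem HasIndepEdgeCover.of_comap_add_right (k : Fin n)
    (h : HasIndepEdgeCover (G.comap (· + k)) b) : HasIndepEdgeCover G b := by
  obtain ⟨U, D, hU, hD, hcard⟩ := h
  refine ⟨U.image (· + k), D.image (· + k), ?_, ?_, card_image_le.trans hcard⟩
  · rintro _ hx _ hy hxy
    simp only [coe_image, Set.mem_image, mem_coe] at hx hy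
    obtain ⟨u, hu, rfl⟩ := hx
    obtain ⟨v, hv, rfl⟩ := hy
    exact hU hu hv (by rintro rfl; exact hxy rfl)
  · intro v hv
    obtain ⟨i, hi, hvi⟩ := hD (v - k) fun h => hv (mem_image.2 ⟨_, h, sub_add_cancel v k⟩)
    refine ⟨i + k, mem_image_of_mem _ hi, ?_⟩
    simp only [sub_eq_iff_eq_add] at hvi
    rcases hvi with rfl | rfl
    · exact Or.inl rfl
    · exact Or.inr (add_right_comm _ _ _)

theorem hasIndepEdgeCover_half (G : SimpleGraph (Fin n)) : HasIndepEdgeCover G (n / 2) := by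
  let odd : Fin (n / 2) → Fin n := fun j => ⟨2 * j + 1, by omega⟩
  refine ⟨{0}, univ.image odd, by simp, fun v hv => ?_, card_image_le.trans (by simp)⟩
  have hv0 : v.val ≠ 0 := fun h => hv (mem_singleton.2 (Fin.ext h))
  obtain ⟨j, hj | hj⟩ := Nat.even_or_odd' v.val
  · refine ⟨odd ⟨j - 1, by omega⟩, mem_image_of_mem _ (mem_univ _), Or.inr (Fin.ext ?_)⟩
    rw [Fin.val_add_one_of_lt' (by simp only [odd]; omega)]
    simp only [odd]
    omega
  · exact ⟨odd ⟨j, by omega⟩, mem_image_of_mem _ (mem_univ _), Or.inl (Fin.ext hj)⟩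

end HasIndepEdgeCover

def cycleDist (x y : Fin n) : ℕ := min (x - y).val (y - x).val

theorem cycleDist_comm (x y : Fin n) : cycleDist x y = cycleDist y x := min_comm _ _

theorem cycleDist_add_right [NeZero n] (x y k : Fin n) :
    cycleDist (x + k) (y + k) = cycleDist x y := by
  rw [cycleDist, cycleDist, add_sub_add_right_eq_sub, add_sub_add_right_eq_sub]

theorem cycleDist_of_lt {x y : Fin n} (h : x < y) : cycleDist x y = min (n + x - y) (y - x) := by
  rw [cycleDist, Fin.coe_sub_iff_lt.2 h, Fin.sub_val_of_le h.le]

def NeighborsInWindow (G : SimpleGraph (Fin n)) (w : Fin n) : Prop :=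
  ∀ y, G.Adj w y → y.val < 5

def GoodWindow [NeZero n] (G : SimpleGraph (Fin n)) : Prop :=
  NeighborsInWindow G 2 ∧ (NeighborsInWindow G 1 ∨ NeighborsInWindow G 3)

section Window

variable {m : ℕ} {G H : SimpleGraph (Fin (m + 5))}

theorem neighborsInWindow_of_adj_one_four (hH : Noncrossing H) (h : H.Adj 1 4) :
    NeighborsInWindow H 2 ∧ NeighborsInWindow H 3 := by
  refine ⟨fun y hy => ?_, fun y hy => ?_⟩ <;> by_contra! hy5 <;>
    refine hH ?_ ?_ ?_ h hy <;>
    simp (disch := omega) only [Fin.lt_def, Fin.coe_ofNat_eq_mod, Nat.mod_eq_of_lt] <;> omega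

/-- Chords at `1` and `2` stay inside `{0, s}` and are shorter than it, hence of length `≤ 2`. -/
theorem neighborsInWindow_of_adj_zero {s : Fin (m + 5)} (hH : Noncrossing H) (h : H.Adj 0 s)
    (hs : cycleDist 0 s = s.val) (hs4 : 4 ≤ s.val)
    (hmin : ∀ x y, H.Adj x y → 3 ≤ cycleDist x y → s.val ≤ cycleDist x y) :
    NeighborsInWindow H 1 ∧ NeighborsInWindow H 2 := by
  have h0 : ((0 : Fin (m + 5)) : ℕ) = 0 := rfl
  have hpos : 0 < s := Fin.lt_def.2 (by omega)
  rw [cycleDist_of_lt hpos, h0] at hs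
  have hwin : ∀ w : Fin (m + 5), w.val = 1 ∨ w.val = 2 → NeighborsInWindow H w := by
    intro w hw y hy
    by_contra! hy5
    have hys : y ≤ s := by
      by_contra! hsy
      exact hH (Fin.lt_def.2 (by omega)) (Fin.lt_def.2 (by omega)) hsy h hy
    rw [Fin.le_def] at hys
    have := hmin w y hy
    rw [cycleDist_of_lt (Fin.lt_def.2 (by omega))] at this
    omega
  exact ⟨hwin 1 (Or.inl rfl), hwin 2 (Or.inr rfl)⟩

theorem neighborsInWindow_of_short (hshort : ∀ x y, H.Adj x y → cycleDist x y ≤ 2)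
    (hear : ¬ H.Adj (-1) 1) : NeighborsInWindow H 1 ∧ NeighborsInWindow H 2 := by
  have hwin : ∀ w y : Fin (m + 5), w.val = 1 ∨ w.val = 2 → H.Adj w y →
      y.val < 5 ∨ (w.val = 1 ∧ y.val = m + 4) := by
    intro w y hw hy
    have := hshort w y hy
    by_contra! hy5
    rw [cycleDist_of_lt (Fin.lt_def.2 (by omega))] at this
    omega
  refine ⟨fun y hy => ?_, fun y hy => ?_⟩
  · refine (hwin 1 y (Or.inl rfl) hy).resolve_right fun h => hear ?_
    rw [show y = -1 from Fin.ext (by simp [h.2])] at hy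
    exact hy.symm
  · exact (hwin 2 y (Or.inr rfl) hy).resolve_right fun h => absurd h.1 (show 2 ≠ 1 by decide)

theorem exists_goodWindow_of_long (hG : Noncrossing G) {x y : Fin (m + 5)} (hxy : G.Adj x y)
    (h3 : 3 ≤ cycleDist x y)
    (hmin : ∀ u v, G.Adj u v → 3 ≤ cycleDist u v → cycleDist x y ≤ cycleDist u v) :
    ∃ k, GoodWindow (G.comap (· + k)) := by
  wlog hyx : (y - x).val = cycleDist x y generalizing x y
  · rw [cycleDist_comm] at h3 hmin
    refine this hxy.symm h3 hmin ?_
    rcases min_choice (x - y).val (y - x).val with h | h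
    · rw [cycleDist, min_comm, h]
    · exact absurd (h.symm ▸ rfl) hyx
  obtain h3 | h4 : cycleDist x y = 3 ∨ 4 ≤ cycleDist x y := by omega
  · have hy : y = 3 + x := sub_eq_iff_eq_add.1 (Fin.ext (hyx.trans h3))
    have := neighborsInWindow_of_adj_one_four (hG.comap_add_right (x - 1)) (by
      rwa [comap_adj, show (4 : Fin (m + 5)) = 3 + 1 from rfl, add_sub_cancel, add_assoc,
        add_sub_cancel, ← hy])
    exact ⟨x - 1, this.1, Or.inr this.2⟩
  · have := neighborsInWindow_of_adj_zero (s := y - x) (hG.comap_add_right x)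
      (by rwa [comap_adj, zero_add, sub_add_cancel])
      (by rw [← cycleDist_add_right _ _ x, zero_add, sub_add_cancel, hyx]) (hyx ▸ h4)
      (fun u v huv h3 => by
        rw [← cycleDist_add_right u v x, hyx] at *
        exact hmin _ _ huv h3)
    exact ⟨x, this.2, Or.inl this.1⟩

theorem exists_goodWindow_of_short (hG : Noncrossing G)
    (hshort : ∀ x y, G.Adj x y → cycleDist x y ≤ 2) : ∃ k, GoodWindow (G.comap (· + k)) := by
  have hshort' : ∀ k x y, (G.comap (· + k)).Adj x y → cycleDist x y ≤ 2 := fun k x y h =>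
    cycleDist_add_right x y k ▸ hshort _ _ h
  by_cases hear : G.Adj (-1) 1
  · have h02 : ¬ G.Adj 0 2 := fun h => hG (a := 0) (b := 1) (c := 2) (d := -1) (by simp)
      (by simp [Fin.lt_def, Nat.mod_eq_of_lt]) (by simp [Fin.lt_def, Nat.mod_eq_of_lt]) h hear.symm
    have := neighborsInWindow_of_short (hshort' 1) (by
      rwa [comap_adj, neg_add_cancel, show (1 + 1 : Fin (m + 5)) = 2 from rfl])
    exact ⟨1, this.2, Or.inl this.1⟩
  · have := neighborsInWindow_of_short (hshort' 0) (by simpa only [comap_adj, add_zero])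
    exact ⟨0, this.2, Or.inl this.1⟩

theorem exists_goodWindow (hG : Noncrossing G) : ∃ k, GoodWindow (G.comap (· + k)) := by
  classical
  by_cases hlong : ∃ p : Fin (m + 5) × Fin (m + 5), G.Adj p.1 p.2 ∧ 3 ≤ cycleDist p.1 p.2
  · obtain ⟨⟨x, y⟩, hp, hmin⟩ := (univ.filter fun p : Fin (m + 5) × Fin (m + 5) =>
      G.Adj p.1 p.2 ∧ 3 ≤ cycleDist p.1 p.2).exists_min_image (fun p => cycleDist p.1 p.2)
      (by simpa [Finset.Nonempty] using hlong)
    simp only [mem_filter, mem_univ, true_and, and_imp, Prod.forall] at hp hmin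
    exact exists_goodWindow_of_long hG hp.1 hp.2 hmin
  · push Not at hlong
    exact exists_goodWindow_of_short hG fun x y h => Nat.le_of_lt_succ (hlong (x, y) h)

end Window

section Lift

variable {m : ℕ}

theorem isIndepSet_insert_image_addNat {G : SimpleGraph (Fin (m + 5))} {U : Finset (Fin m)}
    (hU : (G.comap (Fin.addNat · 5)).IsIndepSet U) {w : Fin (m + 5)}
    (hw : NeighborsInWindow G w) : G.IsIndepSet ↑(insert w (U.image (Fin.addNat · 5))) := by
  have hfar : ∀ u : Fin m, ¬ G.Adj w (u.addNat 5) := fun u h => by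
    have := hw _ h
    simp only [Fin.val_addNat] at this
    omega
  rw [coe_insert, coe_image, IsIndepSet, Set.pairwise_insert]
  refine ⟨?_, ?_⟩
  · rintro _ ⟨u, hu, rfl⟩ _ ⟨v, hv, rfl⟩ huv
    exact hU hu hv fun h => huv (by rw [h])
  · rintro _ ⟨u, -, rfl⟩ -
    exact ⟨hfar u, fun h => hfar u h.symm⟩

variable [NeZero m]

/-- The closing edge `{m + 4, 5}` of the polygon on `5, …, m + 4` lifts to the boundary edge
`{m + 4, 0}`, so if it was used, `5` needs the window edge `{4, 5}`. -/
theorem covers_lift {U D : Finset (Fin m)} (hD : ∀ v ∉ U, ∃ i ∈ D, v = i ∨ v = i + 1)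
    {w : Fin (m + 5)} {W : Finset (Fin (m + 5))}
    (hW : ∀ v : Fin (m + 5), v.val < 5 → v ≠ w → ∃ i ∈ D.image (Fin.addNat · 5) ∪ W,
      v = i ∨ v = i + 1)
    (hW4 : (∃ i ∈ D, i.val + 1 = m) → 4 ∈ W) :
    ∀ v ∉ insert w (U.image (Fin.addNat · 5)),
      ∃ i ∈ D.image (Fin.addNat · 5) ∪ W, v = i ∨ v = i + 1 := by
  intro v hv
  rw [mem_insert, not_or] at hv
  by_cases hv5 : v.val < 5
  · exact hW v hv5 hv.1
  obtain ⟨v', hvv'⟩ : ∃ v' : Fin m, v = v'.addNat 5 :=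
    ⟨⟨v.val - 5, by omega⟩, Fin.ext (by simp only [Fin.val_addNat]; omega)⟩
  obtain ⟨i, hi, hcov⟩ := hD v' fun h => hv.2 (mem_image.2 ⟨v', h, hvv'.symm⟩)
  have hiD : i.addNat 5 ∈ D.image (Fin.addNat · 5) ∪ W := mem_union_left _ (mem_image_of_mem _ hi)
  rcases hcov with rfl | rfl
  · exact ⟨_, hiD, Or.inl hvv'⟩
  by_cases hlast : i.val + 1 = m
  · refine ⟨4, mem_union_right _ (hW4 ⟨i, hi, hlast⟩), Fin.eq_or_eq_add_one_of_val (Or.inr ?_)⟩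
    rw [hvv', Fin.add_one_eq_zero_of_val hlast]
    rfl
  · refine ⟨_, hiD, Fin.eq_or_eq_add_one_of_val (Or.inr ?_)⟩
    rw [hvv', Fin.val_addNat, Fin.val_addNat, Fin.val_add_one_of_lt' (by omega)]

theorem hasIndepEdgeCover_of_window {G : SimpleGraph (Fin (m + 5))} {b : ℕ}
    {U D : Finset (Fin m)} (hU : (G.comap (Fin.addNat · 5)).IsIndepSet U)
    (hD : ∀ v ∉ U, ∃ i ∈ D, v = i ∨ v = i + 1) (hcard : #D ≤ b) {w : Fin (m + 5)}
    (hw : NeighborsInWindow G w) {W : Finset (Fin (m + 5))} (hWcard : #W ≤ 2)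
    (hW : ∀ v : Fin (m + 5), v.val < 5 → v ≠ w → ∃ i ∈ D.image (Fin.addNat · 5) ∪ W,
      v = i ∨ v = i + 1)
    (hW4 : (∃ i ∈ D, i.val + 1 = m) → 4 ∈ W) : HasIndepEdgeCover G (b + 2) :=
  ⟨_, _, isIndepSet_insert_image_addNat hU hw, covers_lift hD hW hW4,
    (card_union_le _ _).trans (add_le_add (card_image_le.trans hcard) hWcard)⟩

theorem HasIndepEdgeCover.lift {G : SimpleGraph (Fin (m + 5))} {b : ℕ}
    (h : HasIndepEdgeCover (G.comap (Fin.addNat · 5)) b) (hG : GoodWindow G) :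
    HasIndepEdgeCover G (b + 2) := by
  obtain ⟨U, D, hU, hD, hcard⟩ := h
  obtain ⟨h2, h13⟩ := hG
  by_cases hwrap : ∃ i ∈ D, i.val + 1 = m
  · -- the lifted closing edge `{m + 4, 0}` covers `0`
    obtain ⟨j, hj, hjm⟩ := hwrap
    have h0 : ∀ W, ∃ i ∈ D.image (Fin.addNat · 5) ∪ W, (0 : Fin (m + 5)) = i ∨ 0 = i + 1 :=
      fun W => ⟨j.addNat 5, mem_union_left _ (mem_image_of_mem _ hj),
        Or.inr (Fin.add_one_eq_zero_of_val (by rw [Fin.val_addNat]; omega)).symm⟩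
    rcases h13 with h1 | h3
    · refine hasIndepEdgeCover_of_window hU hD hcard h1 (W := {2, 4}) card_le_two
        (fun v _ hvw => ?_) fun _ => by simp
      have : v.val ≠ 1 := fun h => hvw (Fin.ext h)
      obtain h | h | h | h : v.val = 0 ∨ v.val = 2 ∨ v.val = 3 ∨ v.val = 4 := by omega
      · exact (Fin.ext h : v = 0) ▸ h0 _
      · exact ⟨2, by simp, Fin.eq_or_eq_add_one_of_val (Or.inl h)⟩
      · exact ⟨2, by simp, Fin.eq_or_eq_add_one_of_val (Or.inr h)⟩
      · exact ⟨4, by simp, Fin.eq_or_eq_add_one_of_val (Or.inl h)⟩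
    · refine hasIndepEdgeCover_of_window hU hD hcard h3 (W := {1, 4}) card_le_two
        (fun v _ hvw => ?_) fun _ => by simp
      have : v.val ≠ 3 := fun h => hvw (Fin.ext h)
      obtain h | h | h | h : v.val = 0 ∨ v.val = 1 ∨ v.val = 2 ∨ v.val = 4 := by omega
      · exact (Fin.ext h : v = 0) ▸ h0 _
      · exact ⟨1, by simp, Fin.eq_or_eq_add_one_of_val (Or.inl h)⟩
      · exact ⟨1, by simp, Fin.eq_or_eq_add_one_of_val (Or.inr h)⟩
      · exact ⟨4, by simp, Fin.eq_or_eq_add_one_of_val (Or.inl h)⟩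
  · refine hasIndepEdgeCover_of_window hU hD hcard h2 (W := {0, 3}) card_le_two
      (fun v _ hvw => ?_) fun h => absurd h hwrap
    have : v.val ≠ 2 := fun h => hvw (Fin.ext h)
    obtain h | h | h | h : v.val = 0 ∨ v.val = 1 ∨ v.val = 3 ∨ v.val = 4 := by omega
    · exact ⟨0, by simp, Fin.eq_or_eq_add_one_of_val (Or.inl h)⟩
    · exact ⟨0, by simp, Fin.eq_or_eq_add_one_of_val (Or.inr h)⟩
    · exact ⟨3, by simp, Fin.eq_or_eq_add_one_of_val (Or.inl h)⟩
    · exact ⟨3, by simp, Fin.eq_or_eq_add_one_of_val (Or.inr h)⟩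

end Lift

def Cross (a b c d : ℕ) : Prop := (a < c ∧ c < b ∧ b < d) ∨ (c < a ∧ a < d ∧ d < b)

instance (a b c d : ℕ) : Decidable (Cross a b c d) := by unfold Cross; infer_instance

theorem Noncrossing.not_cross {G : SimpleGraph (Fin n)} (hG : Noncrossing G) {a b c d : Fin n}
    (hab : G.Adj a b) (hcd : G.Adj c d) : ¬ Cross a b c d := by
  rintro (⟨h₁, h₂, h₃⟩ | ⟨h₁, h₂, h₃⟩)
  · exact hG (Fin.lt_def.2 h₁) (Fin.lt_def.2 h₂) (Fin.lt_def.2 h₃) hab hcd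
  · exact hG (Fin.lt_def.2 h₁) (Fin.lt_def.2 h₂) (Fin.lt_def.2 h₃) hcd hab

/-- Vertex `3 * i + r` of the 9-gon is the `i`-th vertex of residue class `r` mod 3: chords
inside the three classes, one per class, always contain a crossing pair. -/
theorem cross_of_residue_classes : ∀ i j k l p q : Fin 3, i < j → k < l → p < q →
    Cross (3 * i) (3 * j) (3 * k + 1) (3 * l + 1) ∨ Cross (3 * i) (3 * j) (3 * p + 2) (3 * q + 2) ∨
    Cross (3 * k + 1) (3 * l + 1) (3 * p + 2) (3 * q + 2) := by
  decide

theorem exists_residue_class_isIndepSet {G : SimpleGraph (Fin 9)} (hG : Noncrossing G) :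
    ∃ r < 3, ∀ u v : Fin 9, u.val % 3 = r → v.val % 3 = r → ¬ G.Adj u v := by
  by_contra! h
  have chord : ∀ r (hr : r < 3), ∃ i j : Fin 3, i < j ∧
      G.Adj ⟨3 * i + r, by omega⟩ ⟨3 * j + r, by omega⟩ := by
    intro r hr
    obtain ⟨u, v, hu, hv, huv⟩ := h r hr
    wlog hlt : u < v generalizing u v
    · exact this v u hv hu huv.symm (lt_of_le_of_ne (not_lt.1 hlt) huv.ne.symm)
    refine ⟨⟨u / 3, by omega⟩, ⟨v / 3, by omega⟩, Fin.lt_def.2 ?_, ?_⟩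
    · simp only [Fin.lt_def] at hlt ⊢
      omega
    · convert huv <;> dsimp only <;> omega
  obtain ⟨i, j, hij, h₀⟩ := chord 0 (by norm_num)
  obtain ⟨k, l, hkl, h₁⟩ := chord 1 (by norm_num)
  obtain ⟨p, q, hpq, h₂⟩ := chord 2 (by norm_num)
  rcases cross_of_residue_classes i j k l p q hij hkl hpq with h | h | h
  exacts [hG.not_cross h₀ h₁ h, hG.not_cross h₀ h₂ h, hG.not_cross h₁ h₂ h]

theorem hasIndepEdgeCover_nine {G : SimpleGraph (Fin 9)} (hG : Noncrossing G) :
    HasIndepEdgeCover G 3 := by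
  obtain ⟨r, hr, hind⟩ := exists_residue_class_isIndepSet hG
  refine ⟨univ.filter (·.val % 3 = r), univ.filter (·.val % 3 = (r + 1) % 3), ?_, ?_, ?_⟩
  · intro u hu v hv _
    simp only [coe_filter, mem_univ, true_and, Set.mem_ofPred_eq] at hu hv
    exact hind u v hu hv
  · interval_cases r <;> decide
  · interval_cases r <;> decide

theorem hasIndepEdgeCover_of_noncrossing : ∀ {n : ℕ} [NeZero n], n ≠ 4 →
    ∀ {G : SimpleGraph (Fin n)}, Noncrossing G → HasIndepEdgeCover G ((2 * n + 1) / 5) := by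
  intro n
  induction n using Nat.strong_induction_on with
  | _ n ih =>
  intro _ hn G hG
  by_cases hsmall : n ≤ 3 ∨ n = 5 ∨ n = 7
  · exact (hasIndepEdgeCover_half G).mono (by omega)
  by_cases h9 : n = 9
  · subst h9
    exact hasIndepEdgeCover_nine hG
  obtain ⟨m, rfl⟩ : ∃ m, n = m + 5 := ⟨n - 5, by omega⟩
  have : NeZero m := ⟨by omega⟩
  obtain ⟨k, hk⟩ := exists_goodWindow hG
  have hrot := hG.comap_add_right k
  have hcover := ih m (by omega) (by omega) (hrot.comap_of_strictMono (Fin.strictMono_addNat 5))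
  rw [show (2 * (m + 5) + 1) / 5 = (2 * m + 1) / 5 + 2 by omega]
  exact (hcover.lift hk).of_comap_add_right k

end PolygonCover

/-- Only the closing edge `{0, n - 1}` of the boundary cycle has vertices strictly between its
endpoints. -/
theorem not_isBoundaryEdge_of_lt {n : ℕ} {x y z w : Fin n} (hxz : x < z) (hzy : z < y)
    (hw : y < w ∨ w < x) : ¬ isBoundaryEdge n {x, y} := by
  rintro ⟨i, j, -, hij, he⟩
  have hxy := congrArg ((↑) : Finset (Fin n) → Set (Fin n)) he
  rw [coe_pair, coe_pair, Set.pair_eq_pair_iff] at hxy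
  have := Nat.add_one_mod_cases i.isLt
  have := Nat.add_one_mod_cases j.isLt
  have := w.isLt
  unfold adjOnCycle at hij
  simp only [Fin.lt_def] at hxz hzy hw
  rcases hxy with ⟨rfl, rfl⟩ | ⟨rfl, rfl⟩ <;> omega

namespace PolyTriangulation

open PolygonCover SimpleGraph

variable {n : ℕ} (T : PolyTriangulation n)

def graph : SimpleGraph (Fin n) := SimpleGraph.fromRel fun x y => T.isEdge {x, y}

theorem graph_adj {x y : Fin n} : T.graph.Adj x y ↔ x ≠ y ∧ T.isEdge {x, y} := by
  rw [graph, fromRel_adj, pair_comm y x, or_self]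

theorem noncrossing_graph : Noncrossing T.graph := by
  intro a b c d hab hbc hcd hac hbd
  rw [graph_adj] at hac hbd
  rcases hac.2 with hac' | hac'
  · exact not_isBoundaryEdge_of_lt hab hbc (Or.inl hcd) hac'
  rcases hbd.2 with hbd' | hbd'
  · exact not_isBoundaryEdge_of_lt hbc hcd (Or.inr hab) hbd'
  exact T.noncrossing _ hac' _ hbd' ⟨a, c, b, d, rfl, rfl, hab, hbc, hcd⟩

theorem edgeTwoDominating_image [NeZero n] (hn : 2 ≤ n) {U D : Finset (Fin n)}
    (hU : T.graph.IsIndepSet U) (hD : ∀ v ∉ U, ∃ i ∈ D, v = i ∨ v = i + 1) :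
    EdgeTwoDominating T (D.image fun i => {i, i + 1}) := by
  refine ⟨?_, ?_⟩
  · simp only [mem_image, forall_exists_index, and_imp]
    rintro _ i - rfl
    have hval : (i.val + 1) % n = (i + 1).val := by rw [Fin.val_add, Fin.val_one', Nat.add_mod_mod]
    refine ⟨i, i + 1, fun h => ?_, Or.inl hval, rfl⟩
    have := Nat.add_one_mod_cases i.isLt
    rw [hval, ← h] at this
    omega
  · rintro _ ⟨a, b, c, hab, hac, hbc, rfl, eab, eac, ebc⟩
    refine hU.two_le_card_filter (fun v hv => ?_) ((T.graph_adj).2 ⟨hab, eab⟩)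
      ((T.graph_adj).2 ⟨hac, eac⟩) ((T.graph_adj).2 ⟨hbc, ebc⟩)
    obtain ⟨i, hi, hvi⟩ := hD v hv
    exact ⟨_, mem_image_of_mem _ hi, by rcases hvi with rfl | rfl <;> simp⟩

end PolyTriangulation

/-- every triangulation graph with `n ≥ 3` vertices has an edge
2-dominating set of size at most `⌊(2n+1)/5⌋`, except for `n = 4`, where an
edge 2-dominating set of size `2` exists. -/
theorem edge_two_dominating (n : ℕ) (hn : 3 ≤ n) (T : PolyTriangulation n) :
    (n ≠ 4 → ∃ D : Finset (Finset (Fin n)),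
        EdgeTwoDominating T D ∧ D.card ≤ (2 * n + 1) / 5) ∧
    (n = 4 → ∃ D : Finset (Finset (Fin n)),
        EdgeTwoDominating T D ∧ D.card = 2) := by
  refine ⟨fun h4 => ?_, ?_⟩
  · have : NeZero n := ⟨by omega⟩
    obtain ⟨U, D, hU, hD, hcard⟩ :=
      PolygonCover.hasIndepEdgeCover_of_noncrossing h4 T.noncrossing_graph
    exact ⟨_, T.edgeTwoDominating_image (by omega) hU hD, card_image_le.trans hcard⟩
  · rintro rfl
    exact ⟨_, T.edgeTwoDominating_image (U := ∅) (D := {0, 2}) (by norm_num) (by simp)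
      (by decide), by decide⟩
end

section
/- Contracting a boundary edge of a triangulation graph of a polygon with n ≥ 4 vertices yields a triangulation graph of a polygon with n−1 vertices. -/
/-!
Contracting the boundary edge at `i` preserves the cyclic order of the vertices, so boundary
edges go to boundary edges (or collapse), and diagonals of `T` that stay diagonals still pairwise
do not cross. It therefore suffices that every set of noncrossing diagonals of a polygon extends
to a triangulation, i.e. to one with `n - 3` diagonals. For that, pick a vertex at which no
diagonal ends, contract it, extend by induction on the number of vertices, then re-expand and
add the ear cutting off that vertex.
-/

open Finset

/-- The map contracting the boundary edge between vertex `i` and its cyclic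
successor `i+1`, identifying them and renumbering the vertices. -/
def contractMap (n : ℕ) (hn : 4 ≤ n) (i : Fin n) (v : Fin n) : Fin (n - 1) :=
  ⟨(if v.val ≤ i.val then v.val else v.val - 1) % (n - 1),
    Nat.mod_lt _ (by omega)⟩

/-- A diagonal `(a, b)`, `a < b`, of the convex polygon with vertices `0, 1, …, N`; numbering the
vertices this way lets contracting an edge simply lower `N` by one. -/
def IsDiagonal (N : ℕ) (p : ℕ × ℕ) : Prop :=
  p.1 + 2 ≤ p.2 ∧ p.2 ≤ N ∧ ¬(p.1 = 0 ∧ p.2 = N)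

def Crosses (p q : ℕ × ℕ) : Prop :=
  p.1 < q.1 ∧ q.1 < p.2 ∧ p.2 < q.2

def IsDissection (N : ℕ) (F : Finset (ℕ × ℕ)) : Prop :=
  (∀ p ∈ F, IsDiagonal N p) ∧ ∀ p ∈ F, ∀ q ∈ F, ¬ Crosses p q

lemma Crosses.of_map {f : ℕ → ℕ} (hf : Monotone f) {p q : ℕ × ℕ}
    (h : Crosses (Prod.map f f p) (Prod.map f f q)) : Crosses p q :=
  ⟨hf.reflect_lt h.1, hf.reflect_lt h.2.1, hf.reflect_lt h.2.2⟩

lemma not_isDiagonal_of_le_two {N : ℕ} (hN : N ≤ 2) (p : ℕ × ℕ) : ¬ IsDiagonal N p := by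
  unfold IsDiagonal
  omega

/-- Contracts the edge from `a` to `a + 1`. -/
def collapseSucc (a v : ℕ) : ℕ := if v ≤ a then v else v - 1

def skipSucc (a v : ℕ) : ℕ := if v ≤ a then v else v + 1

lemma monotone_collapseSucc (a : ℕ) : Monotone (collapseSucc a) := by
  intro x y h
  unfold collapseSucc
  split_ifs <;> omega

lemma strictMono_skipSucc (a : ℕ) : StrictMono (skipSucc a) := by
  intro x y h
  unfold skipSucc
  split_ifs <;> omega

lemma skipSucc_ne (a v : ℕ) : skipSucc a v ≠ a + 1 := by
  unfold skipSucc
  split_ifs <;> omega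

lemma skipSucc_collapseSucc {a v : ℕ} (hv : v ≠ a + 1) : skipSucc a (collapseSucc a v) = v := by
  unfold skipSucc collapseSucc
  split_ifs <;> omega

namespace IsDissection

variable {N : ℕ} {F : Finset (ℕ × ℕ)}

/-- Take `a + 1` just inside a shortest diagonal: a diagonal ending there would nest strictly
under it or cross it. -/
lemma exists_free_vertex (hF : IsDissection N F) (hN : 2 ≤ N) :
    ∃ a, a + 2 ≤ N ∧ ∀ p ∈ F, p.1 ≠ a + 1 ∧ p.2 ≠ a + 1 := by
  rcases F.eq_empty_or_nonempty with rfl | hne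
  · exact ⟨0, hN, by simp⟩
  obtain ⟨I, hI, hmin⟩ := F.exists_min_image (fun p => p.2 - p.1) hne
  have hIdiag := hF.1 I hI
  unfold IsDiagonal at hIdiag
  refine ⟨I.1, by omega, fun p hp => ?_⟩
  have hpdiag := hF.1 p hp
  have hshort := hmin p hp
  have hpI := hF.2 p hp I hI
  have hIp := hF.2 I hI p hp
  unfold IsDiagonal Crosses at *
  omega

lemma image_collapseSucc (hF : IsDissection N F) {a : ℕ} (ha : a + 2 ≤ N)
    (hfree : ∀ p ∈ F, p.1 ≠ a + 1 ∧ p.2 ≠ a + 1) :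
    IsDissection (N - 1)
      ((F.erase (a, a + 2)).image (Prod.map (collapseSucc a) (collapseSucc a))) := by
  constructor
  · simp only [mem_image, mem_erase]
    rintro _ ⟨p, ⟨hp_ne, hp⟩, rfl⟩
    have hpdiag := hF.1 p hp
    have hpfree := hfree p hp
    have hp_ne' : p.1 ≠ a ∨ p.2 ≠ a + 2 := by
      by_contra! h
      exact hp_ne (Prod.ext h.1 h.2)
    unfold IsDiagonal at *
    simp only [Prod.map_fst, Prod.map_snd, collapseSucc]
    split_ifs <;> omega
  · simp only [mem_image, mem_erase]
    rintro _ ⟨p, ⟨-, hp⟩, rfl⟩ _ ⟨q, ⟨-, hq⟩, rfl⟩ hcross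
    exact hF.2 p hp q hq (hcross.of_map (monotone_collapseSucc a))

lemma insert_image_skipSucc (hF : IsDissection (N - 1) F) {a : ℕ} (ha : a + 2 ≤ N)
    (hN : 3 ≤ N) :
    IsDissection N (insert (a, a + 2) (F.image (Prod.map (skipSucc a) (skipSucc a)))) := by
  have hear : IsDiagonal N (a, a + 2) := by
    unfold IsDiagonal
    omega
  have hear_cross (p : ℕ × ℕ) :
      ¬ Crosses (a, a + 2) (Prod.map (skipSucc a) (skipSucc a) p) ∧
        ¬ Crosses (Prod.map (skipSucc a) (skipSucc a) p) (a, a + 2) := by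
    have h1 := skipSucc_ne a p.1
    have h2 := skipSucc_ne a p.2
    simp only [Crosses, Prod.map_fst, Prod.map_snd]
    omega
  constructor
  · simp only [mem_insert, mem_image]
    rintro _ (rfl | ⟨p, hp, rfl⟩)
    · exact hear
    · have hpdiag := hF.1 p hp
      simp only [IsDiagonal, Prod.map_fst, Prod.map_snd, skipSucc] at hpdiag ⊢
      grind
  · simp only [mem_insert, mem_image]
    rintro _ (rfl | ⟨p, hp, rfl⟩) _ (rfl | ⟨q, hq, rfl⟩)
    · simp [Crosses]
    · exact (hear_cross q).1
    · exact (hear_cross p).2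
    · exact fun h => hF.2 p hp q hq (h.of_map (strictMono_skipSucc a).monotone)

lemma card_insert_image_skipSucc (hF : IsDissection (N - 1) F) (a : ℕ) :
    (insert (a, a + 2) (F.image (Prod.map (skipSucc a) (skipSucc a)))).card = F.card + 1 := by
  have hinj : Function.Injective (Prod.map (skipSucc a) (skipSucc a)) :=
    (strictMono_skipSucc a).injective.prodMap (strictMono_skipSucc a).injective
  rw [card_insert_of_notMem, card_image_of_injective _ hinj]
  rw [mem_image]
  rintro ⟨p, hp, hpa⟩
  have hpdiag := (hF.1 p hp).1
  have h1 : skipSucc a p.1 = a := congrArg Prod.fst hpa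
  have h2 : skipSucc a p.2 = a + 2 := congrArg Prod.snd hpa
  unfold skipSucc at h1 h2
  split_ifs at h1 h2 <;> omega

theorem exists_superset_card_eq (hF : IsDissection N F) :
    ∃ F', F ⊆ F' ∧ IsDissection N F' ∧ F'.card = N - 2 := by
  induction N using Nat.strong_induction_on generalizing F with
  | _ N ih =>
  by_cases hN : N ≤ 2
  · have hF0 : F = ∅ := eq_empty_of_forall_notMem fun p hp =>
      not_isDiagonal_of_le_two hN p (hF.1 p hp)
    exact ⟨F, subset_rfl, hF, by rw [hF0, card_empty]; omega⟩
  obtain ⟨a, ha, hfree⟩ := hF.exists_free_vertex (by omega)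
  obtain ⟨G, hsub, hG, hcard⟩ := ih (N - 1) (by omega) (hF.image_collapseSucc ha hfree)
  refine ⟨_, ?_, hG.insert_image_skipSucc ha (by omega), by
    rw [hG.card_insert_image_skipSucc, hcard]; omega⟩
  intro p hp
  rw [mem_insert, mem_image]
  by_cases hear : p = (a, a + 2)
  · exact Or.inl hear
  refine Or.inr ⟨_, hsub (mem_image_of_mem _ (mem_erase.2 ⟨hear, hp⟩)), ?_⟩
  exact Prod.ext (skipSucc_collapseSucc (hfree p hp).1) (skipSucc_collapseSucc (hfree p hp).2)

end IsDissection

lemma Finset.pair_eq_pair_iff {α : Type*} [DecidableEq α] {x y z w : α} :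
    ({x, y} : Finset α) = {z, w} ↔ x = z ∧ y = w ∨ x = w ∧ y = z := by
  rw [← coe_inj, coe_pair, coe_pair, Set.pair_eq_pair_iff]

lemma adjOnCycle_iff {m : ℕ} {x y : Fin m} :
    adjOnCycle m x y ↔ y.val = x.val + 1 ∨ x.val = y.val + 1 ∨
      (x.val + 1 = m ∧ y.val = 0) ∨ (y.val + 1 = m ∧ x.val = 0) := by
  have hmod (v : Fin m) : (v.val + 1) % m = if v.val + 1 = m then 0 else v.val + 1 := by
    split_ifs with h
    · rw [h, Nat.mod_self]
    · exact Nat.mod_eq_of_lt (by omega)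
  unfold adjOnCycle
  rw [hmod, hmod]
  split_ifs <;> omega

lemma adjOnCycle_of_isBoundaryEdge {m : ℕ} {u v : Fin m} (h : isBoundaryEdge m {u, v}) :
    adjOnCycle m u v := by
  obtain ⟨p, q, -, hpq, he⟩ := h
  rcases Finset.pair_eq_pair_iff.1 he with ⟨rfl, rfl⟩ | ⟨rfl, rfl⟩
  · exact hpq
  · exact hpq.symm

lemma IsDiagonal.exists_eq_val {m : ℕ} {p : ℕ × ℕ} (hp : IsDiagonal (m - 1) p) :
    ∃ a b : Fin m, p = (a.val, b.val) := by
  unfold IsDiagonal at hp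
  exact ⟨⟨p.1, by omega⟩, ⟨p.2, by omega⟩, rfl⟩

lemma isDiagPair_iff {m : ℕ} {e : Finset (Fin m)} :
    isDiagPair m e ↔ ∃ a b : Fin m, IsDiagonal (m - 1) (a.val, b.val) ∧ e = {a, b} := by
  constructor
  · rintro ⟨i, j, hij, hadj, rfl⟩
    rw [adjOnCycle_iff] at hadj
    rw [Ne, Fin.ext_iff] at hij
    have hi := i.isLt
    have hj := j.isLt
    rcases Nat.lt_or_gt_of_ne hij with h | h
    · exact ⟨i, j, by unfold IsDiagonal; omega, rfl⟩
    · exact ⟨j, i, by unfold IsDiagonal; omega, pair_comm i j⟩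
  · rintro ⟨a, b, hab, rfl⟩
    have hb := b.isLt
    unfold IsDiagonal at hab
    refine ⟨a, b, fun h => ?_, ?_, rfl⟩
    · rw [h] at hab
      omega
    · rw [adjOnCycle_iff]
      omega

def chord (m : ℕ) (p : ℕ × ℕ) : Finset (Fin m) :=
  univ.filter fun x => x.val = p.1 ∨ x.val = p.2

lemma chord_val {m : ℕ} (a b : Fin m) : chord m (a.val, b.val) = {a, b} := by
  ext x
  simp [chord, Fin.ext_iff]

lemma isDiagPair_chord {m : ℕ} {p : ℕ × ℕ} (hp : IsDiagonal (m - 1) p) :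
    isDiagPair m (chord m p) := by
  obtain ⟨a, b, rfl⟩ := hp.exists_eq_val
  exact isDiagPair_iff.2 ⟨a, b, hp, chord_val a b⟩

lemma crossing_chord_iff {m : ℕ} {p q : ℕ × ℕ} (hp : IsDiagonal (m - 1) p)
    (hq : IsDiagonal (m - 1) q) : crossing m (chord m p) (chord m q) ↔ Crosses p q := by
  obtain ⟨a, b, rfl⟩ := hp.exists_eq_val
  obtain ⟨c, d, rfl⟩ := hq.exists_eq_val
  rw [chord_val, chord_val]
  constructor
  · rintro ⟨a', b', c', d', hab, hcd, h⟩
    unfold IsDiagonal at hp hq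
    unfold Crosses
    rcases Finset.pair_eq_pair_iff.1 hab with ⟨rfl, rfl⟩ | ⟨rfl, rfl⟩ <;>
      rcases Finset.pair_eq_pair_iff.1 hcd with ⟨rfl, rfl⟩ | ⟨rfl, rfl⟩ <;> omega
  · exact fun h => ⟨a, b, c, d, rfl, rfl, h⟩

lemma chord_injOn (m : ℕ) : Set.InjOn (chord m) {p | IsDiagonal (m - 1) p} := by
  intro p hp q hq hpq
  obtain ⟨a, b, rfl⟩ := IsDiagonal.exists_eq_val hp
  obtain ⟨c, d, rfl⟩ := IsDiagonal.exists_eq_val hq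
  rw [chord_val, chord_val] at hpq
  simp only [Set.mem_ofPred_eq, IsDiagonal] at hp hq
  rcases Finset.pair_eq_pair_iff.1 hpq with ⟨rfl, rfl⟩ | ⟨rfl, rfl⟩
  · rfl
  · omega

theorem PolyTriangulation.exists_subset_diags {m : ℕ} (S : Finset (Finset (Fin m)))
    (hS : ∀ e ∈ S, isDiagPair m e) (hS_cross : ∀ e ∈ S, ∀ f ∈ S, ¬ crossing m e f) :
    ∃ T : PolyTriangulation m, S ⊆ T.diags := by
  classical
  let F := (range m ×ˢ range m).filter fun p => IsDiagonal (m - 1) p ∧ chord m p ∈ S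
  have hF : IsDissection (m - 1) F := by
    refine ⟨fun p hp => (mem_filter.1 hp).2.1, fun p hp q hq hpq => ?_⟩
    obtain ⟨-, hp, hpS⟩ := mem_filter.1 hp
    obtain ⟨-, hq, hqS⟩ := mem_filter.1 hq
    exact hS_cross _ hpS _ hqS ((crossing_chord_iff hp hq).2 hpq)
  obtain ⟨F', hFF', hF', hcard⟩ := hF.exists_superset_card_eq
  refine ⟨⟨F'.image (chord m), ?_, ?_, ?_⟩, ?_⟩
  · simp only [mem_image]
    rintro _ ⟨p, hp, rfl⟩
    exact isDiagPair_chord (hF'.1 p hp)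
  · simp only [mem_image]
    rintro _ ⟨p, hp, rfl⟩ _ ⟨q, hq, rfl⟩
    rw [crossing_chord_iff (hF'.1 p hp) (hF'.1 q hq)]
    exact hF'.2 p hp q hq
  · rw [card_image_of_injOn ((chord_injOn m).mono fun p hp => hF'.1 p hp), hcard]
    omega
  · intro e he
    obtain ⟨a, b, hab, rfl⟩ := isDiagPair_iff.1 (hS e he)
    rw [← chord_val] at he ⊢
    refine mem_image_of_mem _ (hFF' (mem_filter.2 ⟨?_, hab, he⟩))
    simp

lemma exists_pair_eq_of_pair_image_eq {α β : Type*} [DecidableEq α] [DecidableEq β]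
    {f : α → β} {x y : α} {a b : β} (h : ({f x, f y} : Finset β) = {a, b}) :
    ∃ x' y', ({x', y'} : Finset α) = {x, y} ∧ f x' = a ∧ f y' = b := by
  rcases Finset.pair_eq_pair_iff.1 h with ⟨rfl, rfl⟩ | ⟨rfl, rfl⟩
  · exact ⟨x, y, rfl, rfl, rfl⟩
  · exact ⟨y, x, pair_comm y x, rfl, rfl⟩

section ContractMap

variable {n : ℕ} (hn : 4 ≤ n) (i : Fin n)

lemma contractMap_val_cases (x : Fin n) :
    (x.val ≤ i.val ∧ x.val < n - 1 ∧ (contractMap n hn i x).val = x.val) ∨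
    (x.val = n - 1 ∧ i.val = n - 1 ∧ (contractMap n hn i x).val = 0) ∨
    (i.val < x.val ∧ (contractMap n hn i x).val = x.val - 1) := by
  have hx := x.isLt
  have hval : (contractMap n hn i x).val =
      (if x.val ≤ i.val then x.val else x.val - 1) % (n - 1) := rfl
  rw [hval]
  split_ifs with hxi
  · rcases Nat.lt_or_ge x.val (n - 1) with hlt | hge
    · exact Or.inl ⟨hxi, hlt, Nat.mod_eq_of_lt hlt⟩
    · refine Or.inr (Or.inl ⟨by omega, by omega, ?_⟩)
      rw [show x.val = n - 1 by omega, Nat.mod_self]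
  · exact Or.inr (Or.inr ⟨by omega, Nat.mod_eq_of_lt (by omega)⟩)

lemma adjOnCycle_contractMap {x y : Fin n} (h : adjOnCycle n x y)
    (hne : contractMap n hn i x ≠ contractMap n hn i y) :
    adjOnCycle (n - 1) (contractMap n hn i x) (contractMap n hn i y) := by
  rw [adjOnCycle_iff] at h ⊢
  rw [Ne, Fin.ext_iff] at hne
  have hx := contractMap_val_cases hn i x
  have hy := contractMap_val_cases hn i y
  omega

/-- `contractMap` is monotone except that, for `i = n - 1`, vertex `n - 1` wraps around to `0`;
a chord through it then crosses in the opposite orientation. -/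
lemma crossing_of_crossing_contractMap {x y z w : Fin n}
    (h : crossing (n - 1) {contractMap n hn i x, contractMap n hn i y}
      {contractMap n hn i z, contractMap n hn i w}) :
    crossing n {x, y} {z, w} ∨ crossing n {z, w} {x, y} := by
  obtain ⟨a, b, c, d, hab, hcd, hac, hcb, hbd⟩ := h
  obtain ⟨x', y', hxy, rfl, rfl⟩ := exists_pair_eq_of_pair_image_eq hab
  obtain ⟨z', w', hzw, rfl, rfl⟩ := exists_pair_eq_of_pair_image_eq hcd
  have hx := contractMap_val_cases hn i x'
  have hy := contractMap_val_cases hn i y'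
  have hz := contractMap_val_cases hn i z'
  have hw := contractMap_val_cases hn i w'
  by_cases hwrap : x'.val = n - 1 ∧ i.val = n - 1
  · right
    rw [← hxy, ← hzw, pair_comm x']
    exact ⟨z', w', y', x', rfl, rfl, by omega, by omega, by omega⟩
  · left
    rw [← hxy, ← hzw]
    exact ⟨x', y', z', w', rfl, rfl, by omega, by omega, by omega⟩

lemma PolyTriangulation.not_crossing_image_contractMap (T : PolyTriangulation n)
    {e g : Finset (Fin n)} (he : e ∈ T.diags) (hg : g ∈ T.diags) :
    ¬ crossing (n - 1) (e.image (contractMap n hn i)) (g.image (contractMap n hn i)) := by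
  intro h
  obtain ⟨a, b, -, -, rfl⟩ := T.diags_valid e he
  obtain ⟨c, d, -, -, rfl⟩ := T.diags_valid g hg
  simp only [image_insert, image_singleton] at h
  rcases crossing_of_crossing_contractMap hn i h with h | h
  exacts [T.noncrossing _ he _ hg h, T.noncrossing _ hg _ he h]

end ContractMap

/-- contracting a boundary edge of a triangulation graph of a
polygon with `n ≥ 4` vertices yields a triangulation graph of a polygon with
`n - 1` vertices (every edge of `T` survives as an edge of the contraction). -/
theorem contract_boundary_edge (n : ℕ) (hn : 4 ≤ n) (T : PolyTriangulation n)
    (i : Fin n) :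
    ∃ T' : PolyTriangulation (n - 1),
      ∀ u v : Fin n, T.isEdge {u, v} →
        contractMap n hn i u ≠ contractMap n hn i v →
        T'.isEdge {contractMap n hn i u, contractMap n hn i v} := by
  classical
  let S := (T.diags.image (image (contractMap n hn i))).filter (isDiagPair (n - 1))
  have hS_cross : ∀ e ∈ S, ∀ g ∈ S, ¬ crossing (n - 1) e g := by
    simp only [S, mem_filter, mem_image]
    rintro _ ⟨⟨e, he, rfl⟩, -⟩ _ ⟨⟨g, hg, rfl⟩, -⟩
    exact T.not_crossing_image_contractMap hn i he hg
  obtain ⟨T', hST'⟩ :=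
    PolyTriangulation.exists_subset_diags S (fun e he => (mem_filter.1 he).2) hS_cross
  refine ⟨T', fun u v huv hne => ?_⟩
  by_cases hadj : adjOnCycle (n - 1) (contractMap n hn i u) (contractMap n hn i v)
  · exact Or.inl ⟨_, _, hne, hadj, rfl⟩
  have hdiag : {u, v} ∈ T.diags := huv.resolve_left fun hb =>
    hadj (adjOnCycle_contractMap hn i (adjOnCycle_of_isBoundaryEdge hb) hne)
  have himage : ({u, v} : Finset (Fin n)).image (contractMap n hn i) =
      {contractMap n hn i u, contractMap n hn i v} := by
    rw [image_insert, image_singleton]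
  exact Or.inr (hST' (mem_filter.2 ⟨mem_image.2 ⟨_, hdiag, himage⟩, _, _, hne, hadj, rfl⟩))
end

section
/- For every m ≥ 1 there exist triangulation graphs with n = 5m, 5m+1, 5m+3, and 5m+4 vertices each of whose edge 2-dominating sets has size at least ⌊(2n+1)/5⌋. -/
open Finset

/-!
The triangulation strings `m` hexagons `5k, …, 5k+5` along the boundary, each triangulated by
the fan from `5k+1`. Its triangles `{5k+1, 5k+2, 5k+3}` and `{5k+1, 5k+3, 5k+4}` force an edge
2-dominating set to dominate two vertices among `5k+1, …, 5k+4` at distance at least two, hence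
to contain two distinct boundary edges `{j, j+1}` with `5k ≤ j ≤ 5k+4`. For `n = 5m+3, 5m+4` the
ear `{5m, 5m+1, 5m+2}` forces a further edge `{j, j+1}` with `5m ≤ j`. Counting the boundary
edges by the block `j / 5` of their first vertex gives `2m`, resp. `2m+1`, edges.
-/

open Fin.NatCast

variable {n : ℕ}

lemma Finset.pair_of_two_le_card_filter_triple {α : Type*} [DecidableEq α] {a b c : α}
    {p : α → Prop} [DecidablePred p] (h : 2 ≤ #(({a, b, c} : Finset α).filter p)) :
    (p a ∧ p b) ∨ (p a ∧ p c) ∨ (p b ∧ p c) := by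
  by_cases pa : p a <;> by_cases pb : p b <;> by_cases pc : p c <;>
    simp [filter_insert, filter_singleton, pa, pb, pc] at h ⊢

lemma Finset.two_mul_add_card_filter_div_le {α : Type*} (S : Finset α) (f : α → ℕ)
    (d m : ℕ) (h : ∀ k < m, 2 ≤ #{x ∈ S | f x / d = k}) :
    2 * m + #{x ∈ S | f x / d = m} ≤ #S := by
  have hfiber : ∀ k ∈ range (m + 1),
      #{x ∈ {x ∈ S | f x / d ≤ m} | f x / d = k} = #{x ∈ S | f x / d = k} := by
    intro k hk
    rw [filter_filter]
    congr 1
    exact filter_congr fun x _ => by simp only [mem_range] at hk; omega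
  calc 2 * m + #{x ∈ S | f x / d = m}
      ≤ ∑ k ∈ range (m + 1), #{x ∈ S | f x / d = k} := by
        rw [sum_range_succ]
        gcongr
        simpa [mul_comm] using card_nsmul_le_sum (range m) _ 2 fun k hk => h k (mem_range.mp hk)
    _ = #{x ∈ S | f x / d ≤ m} := by
        rw [card_eq_sum_card_fiberwise (f := fun x => f x / d) (t := range (m + 1))]
        · exact (sum_congr rfl hfiber).symm
        · intro x hx
          simpa [Nat.lt_succ_iff] using (mem_filter.mp hx).2
    _ ≤ #S := card_filter_le _ _

section Cycle

variable [NeZero n]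

lemma Fin.val_add_one_eq_mod (i : Fin n) : (i + 1).val = (i.val + 1) % n := by
  rw [Fin.val_add, Fin.val_one', Nat.add_mod_mod]

lemma Fin.val_add_one_of_ne_zero {i : Fin n} (h : i + 1 ≠ 0) : (i + 1).val = i.val + 1 := by
  rw [Fin.val_add_one_eq_mod]
  rcases Nat.lt_or_ge (i.val + 1) n with hlt | hge
  · exact Nat.mod_eq_of_lt hlt
  · have : i.val + 1 = n := by omega
    exact absurd (Fin.ext (by rw [Fin.val_add_one_eq_mod, this, Nat.mod_self, Fin.val_zero])) h

lemma adjOnCycle_iff_s19 {i j : Fin n} : adjOnCycle n i j ↔ j = i + 1 ∨ i = j + 1 := by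
  simp only [adjOnCycle, Fin.ext_iff, Fin.val_add_one_eq_mod, eq_comm]

lemma isBoundaryEdge_natCast {a : ℕ} (h : a + 1 < n) :
    isBoundaryEdge n {(a : Fin n), ((a + 1 : ℕ) : Fin n)} := by
  refine ⟨_, _, fun h' => ?_, Or.inl ?_, rfl⟩
  · have := congrArg Fin.val h'
    rw [Fin.val_cast_of_lt (by omega), Fin.val_cast_of_lt h] at this
    omega
  · rw [Fin.val_cast_of_lt (by omega), Fin.val_cast_of_lt h, Nat.mod_eq_of_lt h]

lemma isDiagPair_natCast {a b : ℕ} (hab : a + 1 < b) (hb : b < n) (hba : b < a + (n - 1)) :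
    isDiagPair n {(a : Fin n), (b : Fin n)} := by
  refine ⟨_, _, fun h => ?_, fun h => ?_, rfl⟩
  · have := congrArg Fin.val h
    rw [Fin.val_cast_of_lt (by omega), Fin.val_cast_of_lt hb] at this
    omega
  · rw [adjOnCycle, Fin.val_cast_of_lt (by omega), Fin.val_cast_of_lt hb] at h
    rcases h with h | h
    · rw [Nat.mod_eq_of_lt (by omega)] at h
      omega
    · rcases Nat.lt_or_ge (b + 1) n with hlt | hge
      · rw [Nat.mod_eq_of_lt hlt] at h
        omega
      · rw [show b + 1 = n by omega, Nat.mod_self] at h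
        omega

lemma val_eq_of_pair_natCast_eq {a b : ℕ} {x y : Fin n} (hab : a < b) (hb : b < n)
    (hxy : x.val < y.val) (h : ({(a : Fin n), (b : Fin n)} : Finset (Fin n)) = {x, y}) :
    x.val = a ∧ y.val = b := by
  have hval : ∀ z ∈ ({x, y} : Finset (Fin n)), z.val = a ∨ z.val = b := by
    intro z hz
    rw [← h, mem_insert, mem_singleton] at hz
    rcases hz with rfl | rfl
    · exact Or.inl (Fin.val_cast_of_lt (by omega))
    · exact Or.inr (Fin.val_cast_of_lt hb)
  have hx := hval x (by simp)
  have hy := hval y (by simp)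
  omega

end Cycle

section EdgeStarts

variable [NeZero n]

def edgeStarts (D : Finset (Finset (Fin n))) : Finset (Fin n) :=
  {i | {i, i + 1} ∈ D}

lemma card_edgeStarts_le (hn : 2 < n) (D : Finset (Finset (Fin n))) : #(edgeStarts D) ≤ #D := by
  refine card_le_card_of_injOn (fun i => {i, i + 1}) (fun i hi => (mem_filter.mp hi).2) ?_
  intro i _ j _ (hij : ({i, i + 1} : Finset (Fin n)) = {j, j + 1})
  have hval : ∀ k : Fin n, (k + 1 + 1).val = (k.val + 2) % n := fun k => by
    rw [Fin.val_add_one_eq_mod, Fin.val_add_one_eq_mod, Nat.mod_add_mod]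
  have hi : i ∈ ({j, j + 1} : Finset (Fin n)) := hij ▸ mem_insert_self _ _
  have hj : j ∈ ({i, i + 1} : Finset (Fin n)) := hij.symm ▸ mem_insert_self _ _
  simp only [mem_insert, mem_singleton] at hi hj
  rcases hi with hi | hi
  · exact hi
  rcases hj with hj | hj
  · exact hj.symm
  -- `i = j + 1` and `j = i + 1` would give `i = i + 2`, impossible in a cycle of length `n > 2`
  have h2 := congrArg Fin.val (hj ▸ hi : i = i + 1 + 1)
  rw [hval] at h2
  rcases Nat.lt_or_ge (i.val + 2) n with hlt | hge
  · rw [Nat.mod_eq_of_lt hlt] at h2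
    omega
  · rw [show i.val + 2 = n + (i.val + 2 - n) by omega, Nat.add_mod_left,
      Nat.mod_eq_of_lt (by omega)] at h2
    omega

lemma exists_mem_edgeStarts_of_incidentTo {D : Finset (Finset (Fin n))}
    (hD : ∀ e ∈ D, isBoundaryEdge n e) {v : Fin n} (hv : incidentTo D v) (hv0 : v ≠ 0) :
    ∃ s ∈ edgeStarts D, s.val ≤ v.val ∧ v.val ≤ s.val + 1 := by
  obtain ⟨e, he, hve⟩ := hv
  obtain ⟨i, j, -, hadj, rfl⟩ := hD e he
  have start_of : ∀ s : Fin n, {s, s + 1} ∈ D → v = s ∨ v = s + 1 →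
      ∃ s ∈ edgeStarts D, s.val ≤ v.val ∧ v.val ≤ s.val + 1 := by
    rintro s hs (rfl | rfl)
    · exact ⟨v, by simpa [edgeStarts] using hs, le_rfl, Nat.le_succ _⟩
    · refine ⟨s, by simpa [edgeStarts] using hs, ?_⟩
      rw [Fin.val_add_one_of_ne_zero hv0]
      omega
  simp only [mem_insert, mem_singleton] at hve
  rcases adjOnCycle_iff_s19.mp hadj with rfl | rfl
  · exact start_of i he hve
  · rw [pair_comm] at he
    exact start_of j he hve.symm

lemma exists_mem_filter_edgeStarts_of_incidentTo {D : Finset (Finset (Fin n))}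
    (hD : ∀ e ∈ D, isBoundaryEdge n e) {v : Fin n} (hv : incidentTo D v) {d k : ℕ}
    (hkv : k * d + 1 ≤ v.val) (hvk : v.val < k * d + d) :
    ∃ s ∈ {s ∈ edgeStarts D | s.val / d = k},
      s.val ≤ v.val ∧ v.val ≤ s.val + 1 := by
  have hv0 : v ≠ 0 := fun h => by simp [h] at hkv
  obtain ⟨s, hs, hsv, hvs⟩ := exists_mem_edgeStarts_of_incidentTo hD hv hv0
  refine ⟨s, mem_filter.mpr ⟨hs, ?_⟩, hsv, hvs⟩
  rw [Nat.div_eq_iff (by omega)]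
  omega

end EdgeStarts

lemma EdgeTwoDominating.two_incidentTo_of_isTriangle {T : PolyTriangulation n}
    {D : Finset (Finset (Fin n))} (hD : EdgeTwoDominating T D) {a b c : Fin n}
    (ht : T.isTriangle {a, b, c}) :
    (incidentTo D a ∧ incidentTo D b) ∨ (incidentTo D a ∧ incidentTo D c) ∨
      (incidentTo D b ∧ incidentTo D c) :=
  pair_of_two_le_card_filter_triple (p := fun v => ∃ e ∈ D, v ∈ e) (hD.2 _ ht)

section Domination

variable [NeZero n] {T : PolyTriangulation n} {D : Finset (Finset (Fin n))}

lemma PolyTriangulation.isTriangle_natCast {a b c : ℕ} (hab : a < b) (hbc : b < c) (hc : c < n)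
    (hab' : T.isEdge {(a : Fin n), (b : Fin n)}) (hac' : T.isEdge {(a : Fin n), (c : Fin n)})
    (hbc' : T.isEdge {(b : Fin n), (c : Fin n)}) :
    T.isTriangle {(a : Fin n), (b : Fin n), (c : Fin n)} := by
  have hval : ∀ {x y : ℕ}, x < y → y < n → (x : Fin n) ≠ (y : Fin n) := fun hxy hy h => by
    have := congrArg Fin.val h
    rw [Fin.val_cast_of_lt (hxy.trans hy), Fin.val_cast_of_lt hy] at this
    omega
  exact ⟨_, _, _, hval hab (hbc.trans hc), hval (hab.trans hbc) hc, hval hbc hc, rfl,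
    hab', hac', hbc'⟩

lemma PolyTriangulation.isTriangle_ear {a : ℕ} (ha : a + 2 < n)
    (hd : {(a : Fin n), ((a + 2 : ℕ) : Fin n)} ∈ T.diags) :
    T.isTriangle {(a : Fin n), ((a + 1 : ℕ) : Fin n), ((a + 2 : ℕ) : Fin n)} :=
  T.isTriangle_natCast (by omega) (by omega) ha (Or.inl (isBoundaryEdge_natCast (by omega)))
    (Or.inr hd) (Or.inl (isBoundaryEdge_natCast ha))

lemma PolyTriangulation.isTriangle_of_mem_diags {a : ℕ} (ha : a + 3 < n)
    (h2 : {(a : Fin n), ((a + 2 : ℕ) : Fin n)} ∈ T.diags)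
    (h3 : {(a : Fin n), ((a + 3 : ℕ) : Fin n)} ∈ T.diags) :
    T.isTriangle {(a : Fin n), ((a + 2 : ℕ) : Fin n), ((a + 3 : ℕ) : Fin n)} :=
  T.isTriangle_natCast (by omega) (by omega) ha (Or.inr h2) (Or.inr h3)
    (Or.inl (isBoundaryEdge_natCast ha))

lemma EdgeTwoDominating.exists_incidentTo_of_ear (hD : EdgeTwoDominating T D) {a : ℕ}
    (ha : a + 2 < n) (hd : {(a : Fin n), ((a + 2 : ℕ) : Fin n)} ∈ T.diags) :
    ∃ x : Fin n, incidentTo D x ∧ a + 1 ≤ x.val ∧ x.val ≤ a + 2 := by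
  have h1 : ((a + 1 : ℕ) : Fin n).val = a + 1 := Fin.val_cast_of_lt (by omega)
  have h2 : ((a + 2 : ℕ) : Fin n).val = a + 2 := Fin.val_cast_of_lt ha
  rcases hD.two_incidentTo_of_isTriangle (T.isTriangle_ear ha hd) with
    ⟨-, hx⟩ | ⟨-, hx⟩ | ⟨hx, -⟩
  · exact ⟨_, hx, by omega, by omega⟩
  · exact ⟨_, hx, by omega, by omega⟩
  · exact ⟨_, hx, by omega, by omega⟩

lemma EdgeTwoDominating.exists_incidentTo_pair_of_mem_diags (hD : EdgeTwoDominating T D) {a : ℕ}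
    (ha : a + 3 < n) (h2 : {(a : Fin n), ((a + 2 : ℕ) : Fin n)} ∈ T.diags)
    (h3 : {(a : Fin n), ((a + 3 : ℕ) : Fin n)} ∈ T.diags) :
    ∃ x y : Fin n, incidentTo D x ∧ incidentTo D y ∧ a ≤ x.val ∧ x.val + 2 ≤ y.val ∧
      y.val ≤ a + 3 := by
  have v0 : (a : Fin n).val = a := Fin.val_cast_of_lt (by omega)
  have v1 : ((a + 1 : ℕ) : Fin n).val = a + 1 := Fin.val_cast_of_lt (by omega)
  have v2 : ((a + 2 : ℕ) : Fin n).val = a + 2 := Fin.val_cast_of_lt (by omega)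
  have v3 : ((a + 3 : ℕ) : Fin n).val = a + 3 := Fin.val_cast_of_lt ha
  rcases hD.two_incidentTo_of_isTriangle (T.isTriangle_of_mem_diags ha h2 h3) with
    ⟨hx, hy⟩ | ⟨hx, hy⟩ | ⟨-, hy⟩
  · exact ⟨_, _, hx, hy, by omega, by omega, by omega⟩
  · exact ⟨_, _, hx, hy, by omega, by omega, by omega⟩
  rcases hD.two_incidentTo_of_isTriangle (T.isTriangle_ear (by omega) h2) with
    ⟨hx, -⟩ | ⟨hx, -⟩ | ⟨hx, -⟩
  · exact ⟨_, _, hx, hy, by omega, by omega, by omega⟩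
  · exact ⟨_, _, hx, hy, by omega, by omega, by omega⟩
  · exact ⟨_, _, hx, hy, by omega, by omega, by omega⟩

lemma two_le_card_filter_edgeStarts (hD : ∀ e ∈ D, isBoundaryEdge n e) {x y : Fin n}
    (hx : incidentTo D x) (hy : incidentTo D y) {d k : ℕ} (hkx : k * d + 1 ≤ x.val)
    (hxy : x.val + 2 ≤ y.val) (hyk : y.val < k * d + d) :
    2 ≤ #{s ∈ edgeStarts D | s.val / d = k} := by
  obtain ⟨s, hs, hsx, -⟩ := exists_mem_filter_edgeStarts_of_incidentTo hD hx hkx (by omega)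
  obtain ⟨t, ht, -, hyt⟩ := exists_mem_filter_edgeStarts_of_incidentTo hD hy (by omega) hyk
  exact one_lt_card.mpr ⟨s, hs, t, ht, fun h => by subst h; omega⟩

lemma EdgeTwoDominating.two_mul_add_card_filter_le (hD : EdgeTwoDominating T D) (hn : 2 < n)
    {m : ℕ} (hmn : 5 * m ≤ n)
    (hblocks : ∀ k < m, {((5 * k + 1 : ℕ) : Fin n), ((5 * k + 3 : ℕ) : Fin n)} ∈ T.diags ∧
      {((5 * k + 1 : ℕ) : Fin n), ((5 * k + 4 : ℕ) : Fin n)} ∈ T.diags) :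
    2 * m + #{s ∈ edgeStarts D | s.val / 5 = m} ≤ #D := by
  refine le_trans ?_ (card_edgeStarts_le hn D)
  refine two_mul_add_card_filter_div_le _ _ 5 m fun k hk => ?_
  obtain ⟨x, y, hx, hy, hkx, hxy, hyk⟩ :=
    hD.exists_incidentTo_pair_of_mem_diags (a := 5 * k + 1) (by omega) (hblocks k hk).1
      (hblocks k hk).2
  exact two_le_card_filter_edgeStarts hD.1 hx hy (by omega) hxy (by omega)

end Domination

section Chords

variable [NeZero n]

def PolyTriangulation.ofChords (chord : ℕ → ℕ × ℕ)
    -- `hi < lo + (n - 1)` excludes the side `{0, n - 1}`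
    (isDiag : ∀ i < n - 3,
      (chord i).1 + 1 < (chord i).2 ∧ (chord i).2 < n ∧ (chord i).2 < (chord i).1 + (n - 1))
    (injOn : Set.InjOn chord (Set.Iio (n - 3)))
    (noncrossing : ∀ i < n - 3, ∀ j < n - 3,
      ¬((chord i).1 < (chord j).1 ∧ (chord j).1 < (chord i).2 ∧ (chord i).2 < (chord j).2)) :
    PolyTriangulation n where
  diags := (range (n - 3)).image fun i => {((chord i).1 : Fin n), ((chord i).2 : Fin n)}
  diags_valid := by
    simp only [mem_image, mem_range]
    rintro _ ⟨i, hi, rfl⟩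
    exact isDiagPair_natCast (isDiag i hi).1 (isDiag i hi).2.1 (isDiag i hi).2.2
  noncrossing := by
    simp only [mem_image, mem_range]
    rintro _ ⟨i, hi, rfl⟩ _ ⟨j, hj, rfl⟩ ⟨a, b, c, d, hab, hcd, hac, hcb, hbd⟩
    obtain ⟨hi1, hi2, -⟩ := isDiag i hi
    obtain ⟨hj1, hj2, -⟩ := isDiag j hj
    obtain ⟨ha, hb⟩ := val_eq_of_pair_natCast_eq (by omega) hi2 (hac.trans hcb) hab
    obtain ⟨hc, hd⟩ := val_eq_of_pair_natCast_eq (by omega) hj2 (hcb.trans hbd) hcd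
    exact noncrossing i hi j hj (by omega)
  maximal := by
    rw [card_image_of_injOn, card_range]
    intro i hi j hj (h : ({_, _} : Finset (Fin n)) = {_, _})
    simp only [coe_range, Set.mem_Iio] at hi hj
    obtain ⟨hi1, hi2, -⟩ := isDiag i hi
    obtain ⟨hj1, hj2, -⟩ := isDiag j hj
    have hcast : ∀ {x : ℕ}, x < n → (x : Fin n).val = x := Fin.val_cast_of_lt
    obtain ⟨h1, h2⟩ := val_eq_of_pair_natCast_eq (by omega) hi2
      (by rw [hcast (by omega), hcast hj2]; omega) h
    rw [hcast (by omega)] at h1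
    rw [hcast hj2] at h2
    exact injOn hi hj (Prod.ext h1.symm h2.symm)

lemma PolyTriangulation.mem_ofChords_diags {chord : ℕ → ℕ × ℕ} {isDiag injOn noncrossing}
    {i a b : ℕ} (hi : i < n - 3) (h : chord i = (a, b)) :
    {(a : Fin n), (b : Fin n)} ∈ (ofChords chord isDiag injOn noncrossing).diags :=
  mem_image.mpr ⟨i, mem_range.mpr hi, by rw [h]⟩

end Chords

section HexChain

/-- Chords `4k, …, 4k+3` (`k < m`) triangulate the hexagon `5k, …, 5k+5` by the fan from `5k+1`
and cut it off by the chord `{5k, 5k+5}`, where `5k+5 = n` stands for the vertex `0`. The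
remaining chords fan the vertices `5m, …, n-1` from `5m` and the polygon `0, 5, 10, …` from `0`.
Only the first `n - 3` chords are used, which also settles the degenerate small cases. -/
def hexChainChord (n m i : ℕ) : ℕ × ℕ :=
  if i < 4 * m then
    if i % 4 = 0 then (5 * (i / 4) + 1, 5 * (i / 4) + 3)
    else if i % 4 = 1 then (5 * (i / 4) + 1, 5 * (i / 4) + 4)
    else if i % 4 = 2 then
      if 5 * (i / 4) + 5 = n then (0, 5 * (i / 4) + 1) else (5 * (i / 4) + 1, 5 * (i / 4) + 5)
    else
      if 5 * (i / 4) + 5 = n then (0, 5 * (i / 4)) else (5 * (i / 4), 5 * (i / 4) + 5)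
  else if i - 4 * m < n - 5 * m - 2 then (5 * m, 5 * m + 2 + (i - 4 * m))
  else (0, 5 * (i - 4 * m - (n - 5 * m - 2)) + 10)

variable {m : ℕ}

lemma hexChainChord_isDiag (hmn : 5 * m ≤ n) : ∀ i < n - 3,
    (hexChainChord n m i).1 + 1 < (hexChainChord n m i).2 ∧ (hexChainChord n m i).2 < n ∧
      (hexChainChord n m i).2 < (hexChainChord n m i).1 + (n - 1) := by
  intro i hi
  unfold hexChainChord
  split_ifs <;> omega

lemma hexChainChord_injOn : Set.InjOn (hexChainChord n m) (Set.Iio (n - 3)) := by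
  intro i hi j hj h
  simp only [Set.mem_Iio] at hi hj
  unfold hexChainChord at h
  split_ifs at h <;> simp only [Prod.mk.injEq] at h <;> omega

lemma hexChainChord_noncrossing : ∀ i < n - 3, ∀ j < n - 3,
    ¬((hexChainChord n m i).1 < (hexChainChord n m j).1 ∧
      (hexChainChord n m j).1 < (hexChainChord n m i).2 ∧
      (hexChainChord n m i).2 < (hexChainChord n m j).2) := by
  intro i hi j hj
  unfold hexChainChord
  split_ifs <;> omega

variable [NeZero n]

def hexChain (m : ℕ) (hmn : 5 * m ≤ n) : PolyTriangulation n :=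
  .ofChords (hexChainChord n m) (hexChainChord_isDiag hmn) hexChainChord_injOn
    hexChainChord_noncrossing

lemma hexChain_block_mem_diags (hmn : 5 * m ≤ n) : ∀ k < m,
    {((5 * k + 1 : ℕ) : Fin n), ((5 * k + 3 : ℕ) : Fin n)} ∈ (hexChain m hmn).diags ∧
      {((5 * k + 1 : ℕ) : Fin n), ((5 * k + 4 : ℕ) : Fin n)} ∈ (hexChain m hmn).diags := by
  intro k hk
  constructor
  · refine PolyTriangulation.mem_ofChords_diags (i := 4 * k) (by omega) ?_
    rw [hexChainChord, if_pos (by omega), if_pos (by omega), show 4 * k / 4 = k by omega]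
  · refine PolyTriangulation.mem_ofChords_diags (i := 4 * k + 1) (by omega) ?_
    rw [hexChainChord, if_pos (by omega), if_neg (by omega), if_pos (by omega),
      show (4 * k + 1) / 4 = k by omega]

lemma hexChain_ear_mem_diags (hm : 0 < m) (hmn : 5 * m ≤ n) (hear : 5 * m + 2 < n) :
    {((5 * m : ℕ) : Fin n), ((5 * m + 2 : ℕ) : Fin n)} ∈ (hexChain m hmn).diags := by
  refine PolyTriangulation.mem_ofChords_diags (i := 4 * m) (by omega) ?_
  rw [hexChainChord, if_neg (lt_irrefl _), if_pos (by omega), Nat.sub_self, add_zero]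

lemma hexChain_two_mul_le_card (hm : 0 < m) (hmn : 5 * m ≤ n) {D : Finset (Finset (Fin n))}
    (hD : EdgeTwoDominating (hexChain m hmn) D) : 2 * m ≤ #D :=
  (Nat.le_add_right _ _).trans
    (hD.two_mul_add_card_filter_le (by omega) hmn (hexChain_block_mem_diags hmn))

lemma hexChain_two_mul_add_one_le_card (hm : 0 < m) (hmn : 5 * m ≤ n) (hear : 5 * m + 2 < n)
    {D : Finset (Finset (Fin n))} (hD : EdgeTwoDominating (hexChain m hmn) D) :
    2 * m + 1 ≤ #D := by
  obtain ⟨x, hx, hmx, hxm⟩ :=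
    hD.exists_incidentTo_of_ear hear (hexChain_ear_mem_diags hm hmn hear)
  obtain ⟨s, hs, -⟩ :=
    exists_mem_filter_edgeStarts_of_incidentTo hD.1 hx (d := 5) (k := m) (by omega) (by omega)
  have hlast := card_pos.mpr ⟨s, hs⟩
  have := hD.two_mul_add_card_filter_le (by omega) hmn (hexChain_block_mem_diags hmn)
  omega

end HexChain

/-- for every `m ≥ 1` there exist triangulation graphs with
`n = 5m, 5m+1, 5m+3, 5m+4` vertices each of whose edge 2-dominating sets has
size at least `⌊(2n+1)/5⌋`. -/
theorem edge_lower_bound_family (m : ℕ) (hm : 1 ≤ m) :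
    (∃ T : PolyTriangulation (5 * m),
      ∀ D, EdgeTwoDominating T D → (2 * (5 * m) + 1) / 5 ≤ D.card) ∧
    (∃ T : PolyTriangulation (5 * m + 1),
      ∀ D, EdgeTwoDominating T D → (2 * (5 * m + 1) + 1) / 5 ≤ D.card) ∧
    (∃ T : PolyTriangulation (5 * m + 3),
      ∀ D, EdgeTwoDominating T D → (2 * (5 * m + 3) + 1) / 5 ≤ D.card) ∧
    (∃ T : PolyTriangulation (5 * m + 4),
      ∀ D, EdgeTwoDominating T D → (2 * (5 * m + 4) + 1) / 5 ≤ D.card) := by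
  have : NeZero (5 * m) := ⟨by omega⟩
  refine ⟨⟨hexChain m le_rfl, fun D hD => ?_⟩, ⟨hexChain m (by omega), fun D hD => ?_⟩,
    ⟨hexChain m (by omega), fun D hD => ?_⟩, ⟨hexChain m (by omega), fun D hD => ?_⟩⟩
  · have := hexChain_two_mul_le_card hm _ hD
    omega
  · have := hexChain_two_mul_le_card hm _ hD
    omega
  · have := hexChain_two_mul_add_one_le_card hm _ (by omega) hD
    omega
  · have := hexChain_two_mul_add_one_le_card hm _ (by omega) hD
    omega
end
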